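/- arXiv:math/0605051 — 6 statements merged into one kernel-verified Lean document; each statement's English description precedes it below -/
import Mathlib

section
/- The supremum over portfolios h in H of RAROC equals 1/λ*, where λ* = sup{λ > 0 : E(λ) ∩ D ≠ ∅}, E(λ) = S₀ - λ(E - S₀). Moreover the set of maximizers equals N = {h ∈ H : ∃ a ∈ ℝ, ∀ x ∈ E(λ*), ∀ y ∈ D, ⟨h,x⟩ ≤ a ≤ ⟨h,y⟩, and ∀ y in the relative interior of D, ⟨h,y⟩ > a}. -/
/-!
For `h ∈ H` both infima in RAROC are attained (`E` and `G` are compact, and `h ≥ 0` on `H*`),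
so `RAROC h = α / β` with `α = min_E ⟨h, · - S₀⟩` and `β = -min_D ⟨h, · - S₀⟩ ≥ 0`. A point of
`E(λ) ∩ D` gives `λ α ≤ β`; taking the supremum, `λ* α ≤ β`, whence `RAROC h ≤ 1/λ*`, with
equality iff `β ≤ λ* α` and `α > 0`. Reading off the extreme values of `h` on `E(λ*)` and on `D`,
this is exactly `h ∈ N`: a minimiser of `h` on `D` lying in `ri D` forces `h` to be constant on `D`.

It remains to see that `N` is nonempty. `E(λ*)` misses `ri D`, since otherwise `λ*` could be
increased, so Hahn–Banach in the direction space of `aff D` properly separates `E(λ*)` from `D`.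
The separating functional is bounded below on `D ⊇ S₀ + H*`, hence nonnegative on `H*`, hence in
`H** = H`.
-/

open Set Matrix Filter Topology AffineMap
open scoped Pointwise

section IntrinsicInterior

variable {V : Type*} [NormedAddCommGroup V] [NormedSpace ℝ V] {s t : Set V}

theorem exists_pos_add_smul_mem_of_mem_intrinsicInterior {y v : V}
    (hy : y ∈ intrinsicInterior ℝ s) (hv : v ∈ (affineSpan ℝ s).direction) :
    ∃ r : ℝ, 0 < r ∧ y + r • v ∈ s := by
  obtain ⟨q, hq, rfl⟩ := hy
  have : Nonempty (affineSpan ℝ s) := ⟨q⟩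
  have hline : ∀ᶠ r in 𝓝 (0 : ℝ),
      r • (⟨v, hv⟩ : (affineSpan ℝ s).direction) +ᵥ q ∈ interior ((↑) ⁻¹' s) :=
    (Continuous.continuousAt (by fun_prop)).preimage_mem_nhds
      (by simpa using isOpen_interior.mem_nhds hq)
  obtain ⟨r, hr, hrs⟩ := hline.exists_gt
  exact ⟨r, hr, by simpa [add_comm] using interior_subset hrs⟩

theorem IsMinOn.apply_eq_of_mem_intrinsicInterior (f : V →ₗ[ℝ] ℝ) {y z : V}
    (hmin : IsMinOn f s y) (hy : y ∈ intrinsicInterior ℝ s) (hz : z ∈ s) : f z = f y := by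
  have hv : y - z ∈ (affineSpan ℝ s).direction :=
    AffineSubspace.vsub_mem_direction (subset_affineSpan ℝ s (intrinsicInterior_subset hy))
      (subset_affineSpan ℝ s hz)
  obtain ⟨r, hr, hmem⟩ := exists_pos_add_smul_mem_of_mem_intrinsicInterior hy hv
  have hle : f y ≤ f y + r * (f y - f z) := by simpa using isMinOn_iff.1 hmin _ hmem
  exact le_antisymm (by nlinarith) (isMinOn_iff.1 hmin z hz)

theorem geometric_hahn_banach_interior {E : Type*} [TopologicalSpace E] [AddCommGroup E]
    [Module ℝ E] [IsTopologicalAddGroup E] [ContinuousSMul ℝ E] {s t : Set E}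
    (hs : Convex ℝ s) (ht : Convex ℝ t) (hst : Disjoint (interior s) t)
    (hsint : (interior s).Nonempty) :
    ∃ (f : StrongDual ℝ E) (u : ℝ), (∀ a ∈ s, f a ≤ u) ∧ (∀ a ∈ interior s, f a < u) ∧
      ∀ b ∈ t, u ≤ f b := by
  obtain ⟨f, u, hlt, hle⟩ := geometric_hahn_banach_open hs.interior isOpen_interior ht hst
  have hs_sub : s ⊆ closure (interior s) := by
    rw [hs.closure_interior_eq_closure_of_nonempty_interior hsint]
    exact subset_closure
  exact ⟨f, u, fun a ha => closure_minimal (fun x hx => (hlt x hx).le)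
    (isClosed_Iic.preimage f.continuous) (hs_sub ha), hlt, hle⟩

theorem geometric_hahn_banach_intrinsicInterior (hs : Convex ℝ s) (ht : Convex ℝ t)
    (htA : t ⊆ affineSpan ℝ s) (hst : Disjoint (intrinsicInterior ℝ s) t)
    (hsint : (intrinsicInterior ℝ s).Nonempty) :
    ∃ (f : StrongDual ℝ V) (u : ℝ), (∀ a ∈ s, f a ≤ u) ∧
      (∀ a ∈ intrinsicInterior ℝ s, f a < u) ∧ ∀ b ∈ t, u ≤ f b := by
  obtain ⟨p, hp⟩ := hsint
  set A := affineSpan ℝ s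
  have hpA : p ∈ A := subset_affineSpan ℝ s (intrinsicInterior_subset hp)
  have : Nonempty A := ⟨⟨p, hpA⟩⟩
  -- transported to the vector space `A.direction` with origin `p`, `ri s` becomes an interior
  let e := AffineIsometryEquiv.vaddConst ℝ (⟨p, hpA⟩ : A)
  let sW : Set A.direction := {w | (w : V) + p ∈ s}
  let tW : Set A.direction := {w | (w : V) + p ∈ t}
  have hint : ∀ w, w ∈ interior sW ↔ (w : V) + p ∈ intrinsicInterior ℝ s := fun w => by
    change w ∈ interior (e.toHomeomorph ⁻¹' ((↑) ⁻¹' s)) ↔ ((e w : A) : V) ∈ _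
    rw [← Homeomorph.preimage_interior, intrinsicInterior, Subtype.val_injective.mem_set_image]
    rfl
  have hsW : Convex ℝ sW := (hs.translate_preimage_left p).linear_preimage A.direction.subtype
  have htW : Convex ℝ tW := (ht.translate_preimage_left p).linear_preimage A.direction.subtype
  have hstW : Disjoint (interior sW) tW :=
    Set.disjoint_left.2 fun w hws hwt => hst.ne_of_mem ((hint w).1 hws) hwt rfl
  obtain ⟨g, u, hgs, hgint, hgt⟩ :=
    geometric_hahn_banach_interior hsW htW hstW ⟨0, (hint 0).2 (by simpa using hp)⟩
  obtain ⟨f, hfg, -⟩ := exists_extension_norm_eq A.direction g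
  have hdecomp : ∀ a ∈ A, ∃ w : A.direction, (w : V) + p = a ∧ f a = g w + f p := fun a ha =>
    ⟨⟨a - p, AffineSubspace.vsub_mem_direction ha hpA⟩, sub_add_cancel a p, by
      rw [← hfg, ← map_add, Submodule.coe_mk, sub_add_cancel]⟩
  refine ⟨f, u + f p, fun a ha => ?_, fun a ha => ?_, fun b hb => ?_⟩
  · obtain ⟨w, rfl, hfw⟩ := hdecomp a (subset_affineSpan ℝ s ha)
    linarith [hgs w ha]
  · obtain ⟨w, rfl, hfw⟩ := hdecomp a (subset_affineSpan ℝ s (intrinsicInterior_subset ha))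
    linarith [hgint w ((hint w).2 ha)]
  · obtain ⟨w, rfl, hfw⟩ := hdecomp b (htA hb)
    linarith [hgt w hb]

end IntrinsicInterior

theorem IsLUB.mul_le_of_forall_mul_le {Λ : Set ℝ} {μ α β : ℝ} (hμ : IsLUB Λ μ) (hμ0 : 0 ≤ μ)
    (hβ : 0 ≤ β) (h : ∀ l ∈ Λ, l * α ≤ β) : μ * α ≤ β := by
  rcases le_or_gt α 0 with hα | hα
  · nlinarith
  · exact (le_div_iff₀ hα).1 (hμ.2 fun l hl => (le_div_iff₀ hα).2 (h l hl))

theorem div_le_inv_of_mul_le {μ α β : ℝ} (hμ : 0 < μ) (hβ : 0 ≤ β) (h : μ * α ≤ β) :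
    α / β ≤ μ⁻¹ := by
  rcases hβ.eq_or_lt with rfl | hβ
  · simpa using hμ.le
  · rw [div_le_iff₀ hβ]
    calc α = μ⁻¹ * (μ * α) := by field_simp
      _ ≤ μ⁻¹ * β := by gcongr

theorem div_eq_inv_iff_of_mul_le {μ α β : ℝ} (hμ : 0 < μ) (hβ : 0 ≤ β) (h : μ * α ≤ β) :
    α / β = μ⁻¹ ↔ β ≤ μ * α ∧ 0 < α := by
  constructor
  · intro hq
    have hβ0 : 0 < β := hβ.lt_of_ne fun h0 => by
      simp only [← h0, div_zero] at hq
      exact (inv_pos.2 hμ).ne hq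
    have hα : α = μ⁻¹ * β := by rw [← hq]; field_simp
    refine ⟨by rw [hα, ← mul_assoc, mul_inv_cancel₀ hμ.ne', one_mul], by rw [hα]; positivity⟩
  · rintro ⟨hle, hα⟩
    rw [le_antisymm hle h]
    field_simp

theorem nonneg_of_forall_le_add_mul {a b c : ℝ} (h : ∀ t : ℝ, 0 ≤ t → a ≤ b + t * c) : 0 ≤ c := by
  by_contra! hc
  have hab : a ≤ b := by simpa using h 0 le_rfl
  have := h ((b - a + 1) / -c) (div_nonneg (by linarith) (by linarith))
  rw [div_mul_eq_mul_div, div_neg, mul_div_cancel_right₀ _ hc.ne] at this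
  linarith

section Scaling

variable {V : Type*} [NormedAddCommGroup V] [NormedSpace ℝ V]

/-- `homothety S₀ (-l) '' E` is the set `E(l) = S₀ - l • (E - S₀)`. -/
def feasibleScalings (E D : Set V) (S₀ : V) : Set ℝ :=
  {l | 0 < l ∧ (homothety S₀ (-l) '' E ∩ D).Nonempty}

theorem IsLUB.pos_of_feasibleScalings {E D : Set V} {S₀ : V} {μ : ℝ}
    (hμ : IsLUB (feasibleScalings E D S₀) μ) : 0 < μ :=
  let ⟨_, hl⟩ := hμ.nonempty
  hl.1.trans_le (hμ.1 hl)

theorem LinearMap.apply_homothety (f : V →ₗ[ℝ] ℝ) (c x : V) (r : ℝ) :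
    f (homothety c r x) = f c + r * (f x - f c) := by
  simp only [homothety_apply, vsub_eq_sub, vadd_eq_add, map_add, map_smul, map_sub, smul_eq_mul]
  ring

theorem coe_homothety_neg (c : V) (l : ℝ) : ⇑(homothety c (-l)) = fun x => c - l • (x - c) := by
  funext x
  rw [homothety_apply, vsub_eq_sub, vadd_eq_add, neg_smul, neg_add_eq_sub]

theorem IsMinOn.isMaxOn_image_homothety {E : Set V} (f : V →ₗ[ℝ] ℝ) {c e₀ : V} {r : ℝ}
    (hr : r ≤ 0) (he₀ : IsMinOn f E e₀) :
    IsMaxOn f (homothety c r '' E) (homothety c r e₀) := by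
  rintro _ ⟨x, hx, rfl⟩
  simp only [mem_ofPred_eq, f.apply_homothety]
  nlinarith [isMinOn_iff.1 he₀ x hx]

theorem IsLUB.disjoint_intrinsicInterior_image_homothety {E D : Set V} {S₀ : V} {μ : ℝ}
    (hμ : IsLUB (feasibleScalings E D S₀) μ) (hED : E ⊆ D) (hS₀ : S₀ ∈ D) :
    Disjoint (intrinsicInterior ℝ D) (homothety S₀ (-μ) '' E) := by
  rw [Set.disjoint_right]
  rintro _ ⟨x, hx, rfl⟩ hxD
  have hv : S₀ - x ∈ (affineSpan ℝ D).direction :=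
    AffineSubspace.vsub_mem_direction (subset_affineSpan ℝ D hS₀)
      (subset_affineSpan ℝ D (hED hx))
  obtain ⟨r, hr, hmem⟩ := exists_pos_add_smul_mem_of_mem_intrinsicInterior hxD hv
  have hshift : homothety S₀ (-μ) x + r • (S₀ - x) = homothety S₀ (-(μ + r)) x := by
    simp only [homothety_apply, vsub_eq_sub, vadd_eq_add]
    module
  have := hμ.1 ⟨by linarith [hμ.pos_of_feasibleScalings], _, ⟨x, hx, rfl⟩, hshift ▸ hmem⟩
  linarith

theorem mul_le_of_mem_feasibleScalings {E D : Set V} (f : V →ₗ[ℝ] ℝ) {S₀ e₀ g₀ : V} {l : ℝ}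
    (he₀ : IsMinOn f E e₀) (hg₀ : IsMinOn f D g₀) (hl : l ∈ feasibleScalings E D S₀) :
    l * (f e₀ - f S₀) ≤ f S₀ - f g₀ := by
  obtain ⟨hl, _, ⟨x, hx, rfl⟩, hxD⟩ := hl
  have h1 := isMinOn_iff.1 hg₀ _ hxD
  rw [f.apply_homothety] at h1
  nlinarith [isMinOn_iff.1 he₀ x hx]

theorem exists_separating_level_iff {C D : Set V} (f : V →ₗ[ℝ] ℝ) {c d p : V}
    (hc : c ∈ C) (hcmax : IsMaxOn f C c) (hd : d ∈ D) (hdmin : IsMinOn f D d)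
    (hp : p ∈ intrinsicInterior ℝ D) :
    (∃ a, (∀ x ∈ C, f x ≤ a) ∧ (∀ y ∈ D, a ≤ f y) ∧ ∀ y ∈ intrinsicInterior ℝ D, a < f y) ↔
      f c ≤ f d ∧ f c < f p := by
  constructor
  · rintro ⟨a, hC, hD, hri⟩
    exact ⟨(hC c hc).trans (hD d hd), (hC c hc).trans_lt (hri p hp)⟩
  · rintro ⟨hcd, hcp⟩
    refine ⟨f c, fun x hx => hcmax hx, fun y hy => hcd.trans (hdmin hy), fun y hy => ?_⟩
    by_contra! hyc
    -- `y` would minimise `f` on `D` at a relative interior point, so `f` would be constant on `D`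
    have hymin : IsMinOn f D y := fun z hz => (hyc.trans hcd).trans (hdmin hz)
    linarith [hymin.apply_eq_of_mem_intrinsicInterior f hy (intrinsicInterior_subset hp)]

theorem IsLUB.mul_le_of_feasibleScalings {E D : Set V} {f : V →ₗ[ℝ] ℝ} {S₀ e₀ g₀ : V} {μ : ℝ}
    (hμ : IsLUB (feasibleScalings E D S₀) μ) (hS₀ : S₀ ∈ D) (he₀ : IsMinOn f E e₀)
    (hg₀ : IsMinOn f D g₀) : μ * (f e₀ - f S₀) ≤ f S₀ - f g₀ :=
  hμ.mul_le_of_forall_mul_le hμ.pos_of_feasibleScalings.le (sub_nonneg.2 (hg₀ hS₀))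
    fun _ hl => mul_le_of_mem_feasibleScalings f he₀ hg₀ hl

theorem image_homothety_subset_affineSpan {E D : Set V} {S₀ : V} (r : ℝ) (hED : E ⊆ D)
    (hS₀ : S₀ ∈ D) : homothety S₀ r '' E ⊆ affineSpan ℝ D := by
  rintro _ ⟨x, hx, rfl⟩
  rw [homothety_eq_lineMap]
  exact lineMap_mem _ (subset_affineSpan ℝ D hS₀) (subset_affineSpan ℝ D (hED hx))

end Scaling

section DotProduct

variable {ι : Type*} [Fintype ι]

abbrev dotProductDual (H : Set (ι → ℝ)) : PointedCone ℝ (ι → ℝ) :=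
  PointedCone.dual (dotProductBilin ℝ ℝ) H

theorem exists_dotProduct_eq (f : Module.Dual ℝ (ι → ℝ)) : ∃ v : ι → ℝ, ∀ x, v ⬝ᵥ x = f x := by
  classical
  exact ⟨(dotProductEquiv ℝ ι).symm f,
    LinearMap.congr_fun ((dotProductEquiv ℝ ι).apply_symm_apply f)⟩

theorem mem_of_forall_mem_dotProductDual {H : Set (ι → ℝ)} (hHcl : IsClosed H)
    (hHconv : Convex ℝ H) (hHcone : ∀ c : ℝ, 0 ≤ c → ∀ h ∈ H, c • h ∈ H) (hHne : H.Nonempty)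
    {v : ι → ℝ} (hv : ∀ k ∈ dotProductDual H, 0 ≤ v ⬝ᵥ k) : v ∈ H := by
  obtain ⟨h₀, hh₀⟩ := hHne
  let C : ProperCone ℝ (ι → ℝ) :=
    { carrier := H
      add_mem' := fun {x y} hx hy => by
        have := hHcone 2 zero_le_two _ (hHconv hx hy (by norm_num : (0 : ℝ) ≤ 1 / 2)
          (by norm_num : (0 : ℝ) ≤ 1 / 2) (by norm_num))
        simpa [smul_add, smul_smul] using this
      zero_mem' := by simpa using hHcone 0 le_rfl h₀ hh₀
      smul_mem' := fun c x hx => hHcone c c.2 x hx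
      isClosed' := hHcl }
  by_contra hvH
  obtain ⟨φ, hφC, hφv⟩ := C.hyperplane_separation_point hvH
  obtain ⟨k, hk⟩ := exists_dotProduct_eq (φ : Module.Dual ℝ (ι → ℝ))
  have hkv := hv k fun h hh => by
    change 0 ≤ h ⬝ᵥ k
    rw [dotProduct_comm, hk]
    exact hφC h hh
  rw [dotProduct_comm, hk] at hkv
  exact hφv.not_ge hkv

theorem exists_isMinOn_add_dotProductDual {G H : Set (ι → ℝ)} (hG : IsCompact G)
    (hGne : G.Nonempty) {h : ι → ℝ} (hh : h ∈ H) :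
    ∃ g ∈ G, IsMinOn (dotProductBilin ℝ ℝ h) (G + dotProductDual H) g := by
  obtain ⟨g, hg, hmin⟩ := hG.exists_isMinOn hGne
    (LinearMap.continuous_of_finiteDimensional (dotProductBilin ℝ ℝ h)).continuousOn
  refine ⟨g, hg, ?_⟩
  rintro _ ⟨y, hy, k, hk, rfl⟩
  have hhk : 0 ≤ h ⬝ᵥ k := hk hh
  simpa [dotProduct_add] using add_le_add (isMinOn_iff.1 hmin y hy) hhk

theorem nonempty_of_bddAbove_feasibleScalings {E G H : Set (ι → ℝ)} {S₀ : ι → ℝ}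
    (hEne : E.Nonempty) (hEG : E ⊆ G)
    (hbdd : BddAbove (feasibleScalings E (G + dotProductDual H) S₀)) : H.Nonempty := by
  by_contra! hH
  subst hH
  obtain ⟨e, he⟩ := hEne
  -- with `H = ∅` the dual cone is everything, so every scaling is feasible
  refine not_bddAbove_Ioi (0 : ℝ) (hbdd.mono fun l (hl : 0 < l) => ?_)
  exact ⟨hl, homothety S₀ (-l) e, mem_image_of_mem _ he,
    Set.mem_add.2 ⟨e, hEG he, _, fun _ h => h.elim, add_sub_cancel e _⟩⟩

theorem sInf_dotProduct_sub_eq_of_isMinOn {s : Set (ι → ℝ)} {h x₀ : ι → ℝ} (S₀ : ι → ℝ)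
    (hx₀ : x₀ ∈ s) (hmin : IsMinOn (dotProductBilin ℝ ℝ h) s x₀) :
    sInf {r | ∃ x ∈ s, r = h ⬝ᵥ (x - S₀)} = h ⬝ᵥ x₀ - h ⬝ᵥ S₀ := by
  refine IsLeast.csInf_eq ⟨⟨x₀, hx₀, (dotProduct_sub _ _ _).symm⟩, ?_⟩
  rintro _ ⟨x, hx, rfl⟩
  rw [dotProduct_sub]
  exact sub_le_sub_right (isMinOn_iff.1 hmin x hx) _

theorem exists_mem_separating_intrinsicInterior {H C D : Set (ι → ℝ)} (hHcl : IsClosed H)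
    (hHconv : Convex ℝ H) (hHcone : ∀ c : ℝ, 0 ≤ c → ∀ h ∈ H, c • h ∈ H) (hHne : H.Nonempty)
    (hC : Convex ℝ C) (hD : Convex ℝ D) (hCD : C ⊆ affineSpan ℝ D)
    (hdisj : Disjoint (intrinsicInterior ℝ D) C) (hDH : D + dotProductDual H ⊆ D) {S₀ : ι → ℝ}
    (hS₀ : S₀ ∈ intrinsicInterior ℝ D) :
    ∃ h ∈ H, ∃ a, (∀ x ∈ C, h ⬝ᵥ x ≤ a) ∧ (∀ y ∈ D, a ≤ h ⬝ᵥ y) ∧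
      ∀ y ∈ intrinsicInterior ℝ D, a < h ⬝ᵥ y := by
  obtain ⟨f, u, hfD, hfri, hfC⟩ :=
    geometric_hahn_banach_intrinsicInterior hD hC hCD hdisj ⟨S₀, hS₀⟩
  obtain ⟨v, hv⟩ := exists_dotProduct_eq (-(f : Module.Dual ℝ (ι → ℝ)))
  simp only [LinearMap.neg_apply, ContinuousLinearMap.coe_coe] at hv
  -- `v` stays bounded below along the rays `S₀ + t • k`, `k ∈ H*`, hence lies in `H** = H`
  have hvH : v ∈ H := mem_of_forall_mem_dotProductDual hHcl hHconv hHcone hHne fun k hk =>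
    nonneg_of_forall_le_add_mul (a := -u) (b := v ⬝ᵥ S₀) fun t ht => by
      have hray := hDH (add_mem_add (intrinsicInterior_subset hS₀)
        ((dotProductDual H).smul_mem ht hk))
      have := hv (S₀ + t • k)
      rw [dotProduct_add, dotProduct_smul, smul_eq_mul] at this
      linarith [hfD _ hray]
  refine ⟨v, hvH, -u, fun x hx => ?_, fun y hy => ?_, fun y hy => ?_⟩
  · simpa [hv] using hfC x hx
  · simpa [hv] using hfD y hy
  · simpa [hv] using hfri y hy

noncomputable def raroc (E D : Set (ι → ℝ)) (S₀ h : ι → ℝ) : ℝ :=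
  sInf {r | ∃ x ∈ E, r = h ⬝ᵥ (x - S₀)} / -sInf {r | ∃ x ∈ D, r = h ⬝ᵥ (x - S₀)}

variable {E D : Set (ι → ℝ)} {S₀ h e₀ g₀ : ι → ℝ} {μ : ℝ}

theorem raroc_eq_div (he₀ : e₀ ∈ E) (he₀min : IsMinOn (dotProductBilin ℝ ℝ h) E e₀)
    (hg₀ : g₀ ∈ D) (hg₀min : IsMinOn (dotProductBilin ℝ ℝ h) D g₀) :
    raroc E D S₀ h = (h ⬝ᵥ e₀ - h ⬝ᵥ S₀) / (h ⬝ᵥ S₀ - h ⬝ᵥ g₀) := by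
  rw [raroc, sInf_dotProduct_sub_eq_of_isMinOn S₀ he₀ he₀min,
    sInf_dotProduct_sub_eq_of_isMinOn S₀ hg₀ hg₀min, neg_sub]

theorem raroc_le_inv (hμ : IsLUB (feasibleScalings E D S₀) μ) (hS₀ : S₀ ∈ D)
    (he₀ : e₀ ∈ E) (he₀min : IsMinOn (dotProductBilin ℝ ℝ h) E e₀)
    (hg₀ : g₀ ∈ D) (hg₀min : IsMinOn (dotProductBilin ℝ ℝ h) D g₀) :
    raroc E D S₀ h ≤ μ⁻¹ := by
  rw [raroc_eq_div he₀ he₀min hg₀ hg₀min]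
  simpa using div_le_inv_of_mul_le hμ.pos_of_feasibleScalings (sub_nonneg.2 (hg₀min hS₀))
    (hμ.mul_le_of_feasibleScalings hS₀ he₀min hg₀min)

theorem raroc_eq_inv_iff (hμ : IsLUB (feasibleScalings E D S₀) μ)
    (hS₀ : S₀ ∈ intrinsicInterior ℝ D)
    (he₀ : e₀ ∈ E) (he₀min : IsMinOn (dotProductBilin ℝ ℝ h) E e₀)
    (hg₀ : g₀ ∈ D) (hg₀min : IsMinOn (dotProductBilin ℝ ℝ h) D g₀) :
    raroc E D S₀ h = μ⁻¹ ↔ ∃ a, (∀ x ∈ homothety S₀ (-μ) '' E, h ⬝ᵥ x ≤ a) ∧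
      (∀ y ∈ D, a ≤ h ⬝ᵥ y) ∧ ∀ y ∈ intrinsicInterior ℝ D, a < h ⬝ᵥ y := by
  have hμ0 := hμ.pos_of_feasibleScalings
  have hS₀D := intrinsicInterior_subset hS₀
  have hmax := he₀min.isMaxOn_image_homothety _ (c := S₀) (neg_nonpos.2 hμ0.le)
  have hkey := hμ.mul_le_of_feasibleScalings hS₀D he₀min hg₀min
  have hβ : 0 ≤ h ⬝ᵥ S₀ - h ⬝ᵥ g₀ := sub_nonneg.2 (hg₀min hS₀D)
  simp only [dotProductBilin_apply_apply] at hkey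
  rw [raroc_eq_div he₀ he₀min hg₀ hg₀min, div_eq_inv_iff_of_mul_le hμ0 hβ hkey]
  refine Iff.trans ?_
    (exists_separating_level_iff _ (mem_image_of_mem _ he₀) hmax hg₀ hg₀min hS₀).symm
  rw [LinearMap.apply_homothety]
  simp only [dotProductBilin_apply_apply]
  constructor <;> rintro ⟨h1, h2⟩ <;> constructor <;> nlinarith

theorem raroc_le_inv_and_eq_inv_iff {G H : Set (ι → ℝ)} (hEk : IsCompact E)
    (hEne : E.Nonempty) (hGk : IsCompact G) (hEG : E ⊆ G)
    (hD : D = G + (dotProductDual H : Set (ι → ℝ))) (hμ : IsLUB (feasibleScalings E D S₀) μ)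
    (hS₀ : S₀ ∈ intrinsicInterior ℝ D) (hh : h ∈ H) :
    raroc E D S₀ h ≤ μ⁻¹ ∧ (raroc E D S₀ h = μ⁻¹ ↔ ∃ a,
      (∀ x ∈ homothety S₀ (-μ) '' E, h ⬝ᵥ x ≤ a) ∧ (∀ y ∈ D, a ≤ h ⬝ᵥ y) ∧
        ∀ y ∈ intrinsicInterior ℝ D, a < h ⬝ᵥ y) := by
  obtain ⟨e₀, he₀, he₀min⟩ := hEk.exists_isMinOn hEne
    (LinearMap.continuous_of_finiteDimensional (dotProductBilin ℝ ℝ h)).continuousOn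
  obtain ⟨g₀, hg₀, hg₀min⟩ := exists_isMinOn_add_dotProductDual hGk ⟨e₀, hEG he₀⟩ hh
  rw [← hD] at hg₀min
  have hg₀D : g₀ ∈ D := hD ▸ ⟨g₀, hg₀, 0, zero_mem _, add_zero g₀⟩
  exact ⟨raroc_le_inv hμ (intrinsicInterior_subset hS₀) he₀ he₀min hg₀D hg₀min,
    raroc_eq_inv_iff hμ hS₀ he₀ he₀min hg₀D hg₀min⟩

end DotProduct

theorem stmt0_general {d : ℕ} (E G H Hstar D : Set (Fin d → ℝ))
    (hEc : Convex ℝ E) (hEk : IsCompact E) (hEne : E.Nonempty)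
    (hGc : Convex ℝ G) (hGk : IsCompact G)
    (hEG : E ⊆ G)
    (hHcl : IsClosed H) (hHconv : Convex ℝ H)
    (hHcone : ∀ c : ℝ, 0 ≤ c → ∀ h ∈ H, c • h ∈ H)
    (hHstar : Hstar = {x | ∀ h ∈ H, 0 ≤ h ⬝ᵥ x})
    (hD : D = G + Hstar)
    (S₀ : Fin d → ℝ)
    (hS₀D : S₀ ∈ intrinsicInterior ℝ D)
    (RAROC : (Fin d → ℝ) → ℝ)
    (hRAROC : ∀ h, RAROC h =
      (sInf {r | ∃ x ∈ E, r = h ⬝ᵥ (x - S₀)}) /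
        (-(sInf {r | ∃ x ∈ D, r = h ⬝ᵥ (x - S₀)})))
    (Elam : ℝ → Set (Fin d → ℝ))
    (hElam : ∀ l, Elam l = (fun x => S₀ - l • (x - S₀)) '' E)
    (lamStar : ℝ)
    (hlam : IsLUB {l : ℝ | 0 < l ∧ (Elam l ∩ D).Nonempty} lamStar)
    (N : Set (Fin d → ℝ))
    (hN : N = {h ∈ H | ∃ a : ℝ,
      (∀ x ∈ Elam lamStar, h ⬝ᵥ x ≤ a) ∧ (∀ y ∈ D, a ≤ h ⬝ᵥ y) ∧
      ∀ y ∈ intrinsicInterior ℝ D, a < h ⬝ᵥ y}) :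
    IsGreatest (RAROC '' H) lamStar⁻¹ ∧
      {h ∈ H | RAROC h = lamStar⁻¹} = N := by
  obtain rfl : RAROC = raroc E D S₀ := funext hRAROC
  obtain rfl : Elam = fun l => homothety S₀ (-l) '' E :=
    funext fun l => by rw [hElam, coe_homothety_neg]
  obtain rfl : Hstar = dotProductDual H := hHstar
  subst hN
  replace hlam : IsLUB (feasibleScalings E D S₀) lamStar := hlam
  have hraroc := fun h (hh : h ∈ H) =>
    raroc_le_inv_and_eq_inv_iff hEk hEne hGk hEG hD hlam hS₀D hh
  have hED : E ⊆ D := hD ▸ fun e he => ⟨e, hEG he, 0, zero_mem _, add_zero e⟩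
  have hS₀D' := intrinsicInterior_subset hS₀D
  obtain ⟨v, hvH, hvN⟩ := exists_mem_separating_intrinsicInterior hHcl hHconv hHcone
    (nonempty_of_bddAbove_feasibleScalings hEne hEG (hD ▸ hlam.bddAbove)) (hEc.affine_image _)
    (hD ▸ hGc.add (dotProductDual H).convex) (image_homothety_subset_affineSpan _ hED hS₀D')
    (hlam.disjoint_intrinsicInterior_image_homothety hED hS₀D')
    (by rw [hD, add_assoc]; exact add_subset_add_left (AddSubmonoid.coe_add_self_eq _).subset)
    hS₀D
  refine ⟨⟨⟨v, hvH, (hraroc v hvH).2.2 hvN⟩, ?_⟩, ?_⟩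
  · rintro _ ⟨h, hh, rfl⟩
    exact (hraroc h hh).1
  · ext h
    exact and_congr_right fun hh => (hraroc h hh).2

/-- Agent-independent optimization (static model): the supremum of RAROC over
portfolios `h ∈ H` equals `λ*⁻¹`, and the set of maximizers equals `N`. -/
theorem stmt0 {d : ℕ} (E G H Hstar D : Set (Fin d → ℝ))
    (hEc : Convex ℝ E) (hEk : IsCompact E) (hEne : E.Nonempty)
    (hGc : Convex ℝ G) (hGk : IsCompact G)
    (hEG : E ⊆ G)
    (hHcl : IsClosed H) (hHconv : Convex ℝ H)
    (hHcone : ∀ c : ℝ, 0 ≤ c → ∀ h ∈ H, c • h ∈ H)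
    (hHstar : Hstar = {x | ∀ h ∈ H, 0 ≤ h ⬝ᵥ x})
    (hD : D = G + Hstar)
    (S₀ : Fin d → ℝ)
    (hS₀D : S₀ ∈ intrinsicInterior ℝ D) (hS₀E : S₀ ∉ E)
    (RAROC : (Fin d → ℝ) → ℝ)
    (hRAROC : ∀ h, RAROC h =
      (sInf {r | ∃ x ∈ E, r = h ⬝ᵥ (x - S₀)}) /
        (-(sInf {r | ∃ x ∈ D, r = h ⬝ᵥ (x - S₀)})))
    (Elam : ℝ → Set (Fin d → ℝ))
    (hElam : ∀ l, Elam l = (fun x => S₀ - l • (x - S₀)) '' E)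
    (lamStar : ℝ)
    (hlam : IsLUB {l : ℝ | 0 < l ∧ (Elam l ∩ D).Nonempty} lamStar)
    (N : Set (Fin d → ℝ))
    (hN : N = {h ∈ H | ∃ a : ℝ,
      (∀ x ∈ Elam lamStar, h ⬝ᵥ x ≤ a) ∧ (∀ y ∈ D, a ≤ h ⬝ᵥ y) ∧
      ∀ y ∈ intrinsicInterior ℝ D, a < h ⬝ᵥ y}) :
    IsGreatest (RAROC '' H) lamStar⁻¹ ∧
      {h ∈ H | RAROC h = lamStar⁻¹} = N :=
  stmt0_general E G H Hstar D hEc hEk hEne hGc hGk hEG hHcl hHconv hHcone hHstar hD S₀ hS₀D RAROC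
    hRAROC Elam hElam lamStar hlam N hN
end

section
/- Assume λ* < ∞. If h ∈ H \ N, then either h is orthogonal to the smallest affine subspace containing D (in which case RAROC(h) = 0), or RAROC(h) < 1/λ*; while for h ∈ N, RAROC(h) = 1/λ*. -/
open Set Matrix Filter Topology
open scoped Pointwise

/-!
Write `u h = inf_{x ∈ E} ⟪h, x - S₀⟫` and `v h = inf_{y ∈ D} ⟪h, y - S₀⟫ ≤ 0`, so that
`RAROC h = u h / -v h`. A feasible `λ`, i.e. a point `S₀ - λ (x - S₀)` of `D` with `x ∈ E`,
gives `λ u ≤ -v`; passing to the supremum, `λ* u ≤ -v` for every `h ∈ H`.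
If equality holds, the level `⟪h, S₀⟫ + v` separates `E(λ*)` from `D`, strictly on the relative
interior unless `h` is constant on `D`, because a linear functional minimised at a relative
interior point is constant; so for `h ∉ N` either `h` is orthogonal to `D` or the inequality is
strict. For `h ∈ N` the separating level `a < ⟪h, S₀⟫` gives `-v ≤ ⟪h, S₀⟫ - a ≤ λ* u`,
forcing `λ* u = -v > 0`.
-/

section IntrinsicInterior

variable {V : Type*} [AddCommGroup V] [Module ℝ V] [TopologicalSpace V]
  [IsTopologicalAddGroup V] [ContinuousSMul ℝ V] {s : Set V} {y z : V}

theorem eventually_add_smul_sub_mem_of_mem_intrinsicInterior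
    (hy : y ∈ intrinsicInterior ℝ s) (hz : z ∈ s) :
    ∀ᶠ t in 𝓝 (0 : ℝ), y + t • (y - z) ∈ s := by
  obtain ⟨p, hp, rfl⟩ := mem_intrinsicInterior.1 hy
  have hline : ∀ t : ℝ, AffineMap.lineMap z (p : V) (1 + t) = p + t • ((p : V) - z) := by
    intro t
    rw [AffineMap.lineMap_apply, vsub_eq_sub, vadd_eq_add]
    module
  let f : ℝ → affineSpan ℝ s := fun t =>
    ⟨AffineMap.lineMap z p (1 + t), AffineMap.lineMap_mem _ (subset_affineSpan ℝ s hz) p.2⟩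
  have hf : Continuous f := by
    refine Continuous.subtype_mk ?_ _
    simp only [hline]
    fun_prop
  have hf0 : f 0 = p := Subtype.ext (by simp [f])
  have hp' : interior ((↑) ⁻¹' s) ∈ 𝓝 (f 0) := hf0 ▸ isOpen_interior.mem_nhds hp
  filter_upwards [hf.continuousAt.preimage_mem_nhds hp'] with t ht
  simpa [f, hline] using interior_subset ht

theorem IsMinOn.eq_of_mem_intrinsicInterior {f : V →ₗ[ℝ] ℝ} (hmin : IsMinOn f s y)
    (hy : y ∈ intrinsicInterior ℝ s) (hz : z ∈ s) : f z = f y := by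
  have hnhds := eventually_add_smul_sub_mem_of_mem_intrinsicInterior hy hz
  obtain ⟨ε, hmem, hε⟩ :=
    ((hnhds.filter_mono nhdsWithin_le_nhds).and (self_mem_nhdsWithin (s := Ioi 0))).exists
  have hext := isMinOn_iff.1 hmin _ hmem
  rw [map_add, map_smul, map_sub, smul_eq_mul] at hext
  have hzy : f z ≤ f y := by nlinarith [show (0 : ℝ) < ε from hε]
  exact hzy.antisymm (isMinOn_iff.1 hmin z hz)

end IntrinsicInterior

theorem IsLUB.mul_le_of_forall_mul_le_s1 {Λ : Set ℝ} {lam u c : ℝ} (hlam : IsLUB Λ lam)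
    (hle : ∀ l ∈ Λ, l * u ≤ c) : lam * u ≤ c := by
  rcases lt_or_ge 0 u with hu | hu
  · exact (le_div_iff₀ hu).1 (hlam.2 fun l hl => (le_div_iff₀ hu).2 (hle l hl))
  · obtain ⟨l, hl⟩ := hlam.nonempty
    exact (mul_le_mul_of_nonpos_right (hlam.1 hl) hu).trans (hle l hl)

theorem div_lt_inv_of_mul_lt {lam u c : ℝ} (hlam : 0 < lam) (hc : 0 ≤ c)
    (hlt : lam * u < c) : u / c < lam⁻¹ := by
  rcases hc.eq_or_lt with rfl | hc
  · simpa using hlam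
  · rw [div_lt_iff₀ hc, ← div_eq_inv_mul, lt_div_iff₀' hlam]
    exact hlt

section Pairing

variable {d : ℕ} {A E D G H : Set (Fin d → ℝ)} {S₀ h x y : Fin d → ℝ} {a lam : ℝ}

/-- Takes the junk value `0` when `A` is empty or the values are not bounded below. -/
noncomputable def infPairing (A : Set (Fin d → ℝ)) (S₀ h : Fin d → ℝ) : ℝ :=
  sInf {r | ∃ x ∈ A, r = h ⬝ᵥ (x - S₀)}

theorem infPairing_le (hA : BddBelow {r | ∃ x ∈ A, r = h ⬝ᵥ (x - S₀)}) (hx : x ∈ A) :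
    infPairing A S₀ h ≤ h ⬝ᵥ (x - S₀) :=
  csInf_le hA ⟨x, hx, rfl⟩

theorem le_infPairing (hA : A.Nonempty) (hb : ∀ x ∈ A, a ≤ h ⬝ᵥ (x - S₀)) :
    a ≤ infPairing A S₀ h := by
  obtain ⟨x, hx⟩ := hA
  refine le_csInf ⟨_, x, hx, rfl⟩ ?_
  rintro _ ⟨x, hx, rfl⟩
  exact hb x hx

theorem IsCompact.bddBelow_dotProduct_sub (hA : IsCompact A) :
    BddBelow {r | ∃ x ∈ A, r = h ⬝ᵥ (x - S₀)} := by
  obtain ⟨b, hb⟩ := (hA.image (f := fun x => h ⬝ᵥ (x - S₀)) (by fun_prop)).bddBelow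
  refine ⟨b, ?_⟩
  rintro _ ⟨x, hx, rfl⟩
  exact hb ⟨x, hx, rfl⟩

theorem bddBelow_dotProduct_sub_add_dualCone (hG : IsCompact G) (hh : h ∈ H) :
    BddBelow {r | ∃ x ∈ G + {k | ∀ h ∈ H, 0 ≤ h ⬝ᵥ k}, r = h ⬝ᵥ (x - S₀)} := by
  obtain ⟨b, hb⟩ := hG.bddBelow_dotProduct_sub (h := h) (S₀ := S₀)
  refine ⟨b, ?_⟩
  rintro _ ⟨_, ⟨g, hg, k, hk, rfl⟩, rfl⟩
  calc b ≤ h ⬝ᵥ (g - S₀) := hb ⟨g, hg, rfl⟩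
    _ ≤ h ⬝ᵥ (g - S₀) + h ⬝ᵥ k := le_add_of_nonneg_right (hk h hh)
    _ = h ⬝ᵥ (g + k - S₀) := by rw [← dotProduct_add, sub_add_eq_add_sub]

theorem mul_infPairing_le_neg_infPairing (hE : BddBelow {r | ∃ x ∈ E, r = h ⬝ᵥ (x - S₀)})
    (hD : BddBelow {r | ∃ x ∈ D, r = h ⬝ᵥ (x - S₀)}) (hlam : 0 ≤ lam) (hx : x ∈ E)
    (hxD : S₀ - lam • (x - S₀) ∈ D) :
    lam * infPairing E S₀ h ≤ -infPairing D S₀ h := by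
  have hv := infPairing_le hD hxD
  rw [sub_sub_cancel_left, dotProduct_neg, dotProduct_smul, smul_eq_mul] at hv
  nlinarith [infPairing_le hE hx]

theorem IsLUB.mul_infPairing_le (hE : BddBelow {r | ∃ x ∈ E, r = h ⬝ᵥ (x - S₀)})
    (hD : BddBelow {r | ∃ x ∈ D, r = h ⬝ᵥ (x - S₀)})
    (hlam : IsLUB {l : ℝ | 0 < l ∧ ((fun x => S₀ - l • (x - S₀)) '' E ∩ D).Nonempty} lam) :
    lam * infPairing E S₀ h ≤ -infPairing D S₀ h :=
  hlam.mul_le_of_forall_mul_le_s1 fun _ ⟨hl, _, ⟨_, hx, rfl⟩, hxD⟩ =>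
    mul_infPairing_le_neg_infPairing hE hD hl.le hx hxD

theorem sub_le_mul_infPairing (hE : E.Nonempty) (hlam : 0 < lam)
    (hsep : ∀ x ∈ (fun x => S₀ - lam • (x - S₀)) '' E, h ⬝ᵥ x ≤ a) :
    h ⬝ᵥ S₀ - a ≤ lam * infPairing E S₀ h := by
  rw [← div_le_iff₀' hlam]
  refine le_infPairing hE fun x hx => ?_
  have hx' := hsep _ ⟨x, hx, rfl⟩
  rw [dotProduct_sub, dotProduct_smul, smul_eq_mul] at hx'
  rw [div_le_iff₀' hlam]
  linarith

theorem neg_infPairing_le (hD : D.Nonempty) (hsep : ∀ y ∈ D, a ≤ h ⬝ᵥ y) :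
    -infPairing D S₀ h ≤ h ⬝ᵥ S₀ - a := by
  have : a - h ⬝ᵥ S₀ ≤ infPairing D S₀ h :=
    le_infPairing hD fun y hy => by rw [dotProduct_sub]; linarith [hsep y hy]
  linarith

theorem lt_dotProduct_of_mem_intrinsicInterior (hsep : ∀ y ∈ D, a ≤ h ⬝ᵥ y)
    (horth : ¬ ∀ x ∈ D, ∀ y ∈ D, h ⬝ᵥ (x - y) = 0) (hy : y ∈ intrinsicInterior ℝ D) :
    a < h ⬝ᵥ y := by
  by_contra! hya
  have hmin : IsMinOn (dotProductBilin ℝ ℝ h) D y :=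
    isMinOn_iff.2 fun z hz => hya.trans (hsep z hz)
  refine horth fun x hx z hz => ?_
  have hxy := hmin.eq_of_mem_intrinsicInterior hy hx
  have hzy := hmin.eq_of_mem_intrinsicInterior hy hz
  simp only [dotProductBilin_apply_apply] at hxy hzy
  rw [dotProduct_sub, hxy, hzy, sub_self]

theorem exists_separation_of_neg_infPairing_le
    (hE : BddBelow {r | ∃ x ∈ E, r = h ⬝ᵥ (x - S₀)})
    (hD : BddBelow {r | ∃ x ∈ D, r = h ⬝ᵥ (x - S₀)}) (hlam : 0 ≤ lam)
    (hge : -infPairing D S₀ h ≤ lam * infPairing E S₀ h)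
    (horth : ¬ ∀ x ∈ D, ∀ y ∈ D, h ⬝ᵥ (x - y) = 0) :
    ∃ a : ℝ, (∀ x ∈ (fun x => S₀ - lam • (x - S₀)) '' E, h ⬝ᵥ x ≤ a) ∧
      (∀ y ∈ D, a ≤ h ⬝ᵥ y) ∧ ∀ y ∈ intrinsicInterior ℝ D, a < h ⬝ᵥ y := by
  have hsepD : ∀ y ∈ D, h ⬝ᵥ S₀ + infPairing D S₀ h ≤ h ⬝ᵥ y := fun y hy => by
    linarith [infPairing_le hD hy, dotProduct_sub h y S₀]
  refine ⟨h ⬝ᵥ S₀ + infPairing D S₀ h, ?_, hsepD, fun y hy =>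
    lt_dotProduct_of_mem_intrinsicInterior hsepD horth hy⟩
  rintro _ ⟨x, hx, rfl⟩
  rw [dotProduct_sub, dotProduct_smul, smul_eq_mul]
  nlinarith [infPairing_le hE hx]

theorem infPairing_div_neg_infPairing_eq_inv (hE : E.Nonempty) (hS₀ : S₀ ∈ D) (hlam : 0 < lam)
    (hle : lam * infPairing E S₀ h ≤ -infPairing D S₀ h)
    (hsepE : ∀ x ∈ (fun x => S₀ - lam • (x - S₀)) '' E, h ⬝ᵥ x ≤ a)
    (hsepD : ∀ y ∈ D, a ≤ h ⬝ᵥ y) (hgap : a < h ⬝ᵥ S₀) :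
    infPairing E S₀ h / -infPairing D S₀ h = lam⁻¹ := by
  have hu := sub_le_mul_infPairing hE hlam hsepE
  have heq : -infPairing D S₀ h = lam * infPairing E S₀ h :=
    le_antisymm ((neg_infPairing_le ⟨S₀, hS₀⟩ hsepD).trans hu) hle
  have hu0 : infPairing E S₀ h ≠ 0 := by
    rintro hu0
    rw [hu0, mul_zero] at hu
    linarith
  rw [heq, div_mul_cancel_right₀ hu0]

end Pairing

theorem stmt1_general {d : ℕ} (E G H Hstar D : Set (Fin d → ℝ))
    (hEk : IsCompact E) (hEne : E.Nonempty)
    (hGk : IsCompact G)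
    (hHstar : Hstar = {x | ∀ h ∈ H, 0 ≤ h ⬝ᵥ x})
    (hD : D = G + Hstar)
    (S₀ : Fin d → ℝ)
    (hS₀D : S₀ ∈ intrinsicInterior ℝ D)
    (RAROC : (Fin d → ℝ) → ℝ)
    (hRAROC : ∀ h, RAROC h =
      (sInf {r | ∃ x ∈ E, r = h ⬝ᵥ (x - S₀)}) /
        (-(sInf {r | ∃ x ∈ D, r = h ⬝ᵥ (x - S₀)})))
    (Elam : ℝ → Set (Fin d → ℝ))
    (hElam : ∀ l, Elam l = (fun x => S₀ - l • (x - S₀)) '' E)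
    (lamStar : ℝ)
    (hlam : IsLUB {l : ℝ | 0 < l ∧ (Elam l ∩ D).Nonempty} lamStar)
    (N : Set (Fin d → ℝ))
    (hN : N = {h ∈ H | ∃ a : ℝ,
      (∀ x ∈ Elam lamStar, h ⬝ᵥ x ≤ a) ∧ (∀ y ∈ D, a ≤ h ⬝ᵥ y) ∧
      ∀ y ∈ intrinsicInterior ℝ D, a < h ⬝ᵥ y}) :
    (∀ h ∈ H \ N,
      ((∀ x ∈ D, ∀ y ∈ D, h ⬝ᵥ (x - y) = 0) ∧ RAROC h = 0) ∨
        RAROC h < lamStar⁻¹) ∧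
    ∀ h ∈ N, RAROC h = lamStar⁻¹ := by
  obtain rfl : Elam = fun l => (fun x => S₀ - l • (x - S₀)) '' E := funext hElam
  have hR : ∀ h, RAROC h = infPairing E S₀ h / -infPairing D S₀ h := hRAROC
  have hS₀D' : S₀ ∈ D := intrinsicInterior_subset hS₀D
  have hlamPos : 0 < lamStar := by
    obtain ⟨l, hl⟩ := hlam.nonempty
    exact hl.1.trans_le (hlam.1 hl)
  have hDbdd : ∀ h ∈ H, BddBelow {r | ∃ x ∈ D, r = h ⬝ᵥ (x - S₀)} := fun h hh =>
    hD ▸ hHstar ▸ bddBelow_dotProduct_sub_add_dualCone hGk hh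
  have hkey : ∀ h ∈ H, lamStar * infPairing E S₀ h ≤ -infPairing D S₀ h := fun h hh =>
    hlam.mul_infPairing_le hEk.bddBelow_dotProduct_sub (hDbdd h hh)
  refine ⟨fun h ⟨hhH, hhN⟩ => ?_, fun h hhN => ?_⟩
  · have hv : infPairing D S₀ h ≤ 0 := by simpa using infPairing_le (hDbdd h hhH) hS₀D'
    by_cases horth : ∀ x ∈ D, ∀ y ∈ D, h ⬝ᵥ (x - y) = 0
    · have hv0 : infPairing D S₀ h = 0 :=
        hv.antisymm (le_infPairing ⟨S₀, hS₀D'⟩ fun x hx => (horth x hx S₀ hS₀D').ge)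
      exact Or.inl ⟨horth, by rw [hR, hv0, neg_zero, div_zero]⟩
    have hlt : lamStar * infPairing E S₀ h < -infPairing D S₀ h :=
      (hkey h hhH).lt_of_ne fun heq => hhN <| hN ▸ ⟨hhH,
        exists_separation_of_neg_infPairing_le hEk.bddBelow_dotProduct_sub (hDbdd h hhH)
          hlamPos.le heq.ge horth⟩
    exact Or.inr (hR h ▸ div_lt_inv_of_mul_lt hlamPos (neg_nonneg.2 hv) hlt)
  · obtain ⟨hhH, a, hsepE, hsepD, hsepI⟩ := hN ▸ hhN
    rw [hR]
    exact infPairing_div_neg_infPairing_eq_inv hEne hS₀D' hlamPos (hkey h hhH) hsepE hsepD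
      (hsepI S₀ hS₀D)

/-- Case analysis for the agent-independent optimization: if `h ∈ H \ N`, then
either `h` is orthogonal to the smallest affine subspace containing `D` (and then
`RAROC h = 0`) or `RAROC h < λ*⁻¹`; while `RAROC h = λ*⁻¹` for `h ∈ N`. -/
theorem stmt1 {d : ℕ} (E G H Hstar D : Set (Fin d → ℝ))
    (hEc : Convex ℝ E) (hEk : IsCompact E) (hEne : E.Nonempty)
    (hGc : Convex ℝ G) (hGk : IsCompact G)
    (hEG : E ⊆ G)
    (hHcl : IsClosed H) (hHconv : Convex ℝ H)
    (hHcone : ∀ c : ℝ, 0 ≤ c → ∀ h ∈ H, c • h ∈ H)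
    (hHstar : Hstar = {x | ∀ h ∈ H, 0 ≤ h ⬝ᵥ x})
    (hD : D = G + Hstar)
    (S₀ : Fin d → ℝ)
    (hS₀D : S₀ ∈ intrinsicInterior ℝ D) (hS₀E : S₀ ∉ E)
    (RAROC : (Fin d → ℝ) → ℝ)
    (hRAROC : ∀ h, RAROC h =
      (sInf {r | ∃ x ∈ E, r = h ⬝ᵥ (x - S₀)}) /
        (-(sInf {r | ∃ x ∈ D, r = h ⬝ᵥ (x - S₀)})))
    (Elam : ℝ → Set (Fin d → ℝ))
    (hElam : ∀ l, Elam l = (fun x => S₀ - l • (x - S₀)) '' E)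
    (lamStar : ℝ)
    (hlam : IsLUB {l : ℝ | 0 < l ∧ (Elam l ∩ D).Nonempty} lamStar)
    (N : Set (Fin d → ℝ))
    (hN : N = {h ∈ H | ∃ a : ℝ,
      (∀ x ∈ Elam lamStar, h ⬝ᵥ x ≤ a) ∧ (∀ y ∈ D, a ≤ h ⬝ᵥ y) ∧
      ∀ y ∈ intrinsicInterior ℝ D, a < h ⬝ᵥ y}) :
    (∀ h ∈ H \ N,
      ((∀ x ∈ D, ∀ y ∈ D, h ⬝ᵥ (x - y) = 0) ∧ RAROC h = 0) ∨
        RAROC h < lamStar⁻¹) ∧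
    ∀ h ∈ N, RAROC h = lamStar⁻¹ :=
  stmt1_general E G H Hstar D hEk hEne hGk hHstar hD S₀ hS₀D RAROC hRAROC Elam hElam lamStar hlam N
    hN
end

section
/- Let ξ be a Gaussian vector in ℝ^d with mean a and covariance C, S₀ in the relative interior of G = a + {C^{1/2}x : ‖x‖ ≤ γ} with S₀ ≠ a, and u(⟨h,ξ⟩) = ⟨h,a⟩ - γ√⟨h, C h⟩. Then the maximal RAROC over h ∈ ℝ^d equals r/(γ - r) where r = ⟨S₀ - a, C^{-1}(S₀ - a)⟩^{1/2}, and the set of maximizers is {h : C h = c(a - S₀), c > 0}. -/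
open Set Matrix

/-!
Write `b = a - S₀`, `t = ⟨h, b⟩` and `s = √⟨h, C h⟩`. Cauchy–Schwarz for the inner product
defined by `C` gives `t ≤ r s`, where `r = √⟨b, C⁻¹ b⟩` is the dual norm of `b`, with equality
and `s > 0` exactly when `C h` is a positive multiple of `b`. Since `t / (γ s - t)` increases
with `t`, the RAROC is at most `r s / ((γ - r) s) = r / (γ - r)`, attained exactly in the
equality case of Cauchy–Schwarz.
-/

theorem div_mul_sub_le_div_sub {γ r s t : ℝ} (hr : 0 < r) (hrγ : r < γ) (hs : 0 ≤ s)
    (ht : t ≤ r * s) : t / (γ * s - t) ≤ r / (γ - r) := by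
  have hγr : 0 < γ - r := sub_pos.mpr hrγ
  rcases le_or_gt t 0 with ht0 | ht0
  · have hden : 0 ≤ γ * s - t := by nlinarith
    exact (div_nonpos_of_nonpos_of_nonneg ht0 hden).trans (div_pos hr hγr).le
  · have hs' : 0 < s := pos_of_mul_pos_right (ht0.trans_le ht) hr.le
    have hden : 0 < γ * s - t := by nlinarith
    rw [div_le_div_iff₀ hden hγr]
    nlinarith

theorem div_mul_sub_eq_div_sub_iff {γ r s t : ℝ} (hr : 0 < r) (hrγ : r < γ) (hs : 0 ≤ s)
    (ht : t ≤ r * s) : t / (γ * s - t) = r / (γ - r) ↔ 0 < s ∧ t = r * s := by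
  have hγr : 0 < γ - r := sub_pos.mpr hrγ
  constructor
  · intro heq
    have ht0 : 0 < t := by
      by_contra! ht0
      have hden : 0 ≤ γ * s - t := by nlinarith
      have := div_nonpos_of_nonpos_of_nonneg ht0 hden
      rw [heq] at this
      exact this.not_gt (div_pos hr hγr)
    have hs' : 0 < s := pos_of_mul_pos_right (ht0.trans_le ht) hr.le
    have hden : 0 < γ * s - t := by nlinarith
    rw [div_eq_div_iff hden.ne' hγr.ne'] at heq
    exact ⟨hs', by nlinarith⟩
  · rintro ⟨hs', rfl⟩
    rw [show γ * s - r * s = (γ - r) * s by ring, mul_div_mul_right _ _ hs'.ne']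

namespace Matrix

variable {n : Type*} [Fintype n] [DecidableEq n] {C : Matrix n n ℝ}

theorem IsHermitian.isSymm_toBilin' (hC : C.IsHermitian) : LinearMap.IsSymm (toBilin' C) :=
  LinearMap.BilinForm.isSymm_iff.mp (isSymm_toBilin'_iff_isSymm.mpr (isHermitian_iff_isSymm.mp hC))

theorem PosSemidef.dotProduct_mulVec_sq_le (hC : C.PosSemidef) (x y : n → ℝ) :
    (x ⬝ᵥ C *ᵥ y) ^ 2 ≤ (x ⬝ᵥ C *ᵥ x) * (y ⬝ᵥ C *ᵥ y) := by
  simpa only [toBilin'_apply'] using (toBilin' C).apply_sq_le_of_symm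
    (fun v => by simpa [toBilin'_apply'] using hC.dotProduct_mulVec_nonneg v)
    hC.isHermitian.isSymm_toBilin' x y

theorem PosDef.smul_eq_smul_of_dotProduct_mulVec_sq_eq (hC : C.PosDef) {x y : n → ℝ}
    (h : (x ⬝ᵥ C *ᵥ y) ^ 2 = (x ⬝ᵥ C *ᵥ x) * (y ⬝ᵥ C *ᵥ y)) :
    (x ⬝ᵥ C *ᵥ y) • x = (x ⬝ᵥ C *ᵥ x) • y := by
  set B := toBilin' C
  have hsymm : B y x = B x y := hC.isHermitian.isSymm_toBilin'.eq y x
  set v := B x y • x - B x x • y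
  have hv : B v v = 0 := by
    rw [LinearMap.BilinForm.apply_smul_sub_smul_sub_eq, hsymm]
    simp only [B, toBilin'_apply', ← sq, h, sub_self, mul_zero]
  by_contra hne
  have := hC.dotProduct_mulVec_pos (sub_ne_zero.mpr hne)
  simp only [star_trivial, ← toBilin'_apply'] at this
  exact this.ne' hv

theorem PosDef.mulVec_inv_mulVec (hC : C.PosDef) (b : n → ℝ) : C *ᵥ (C⁻¹ *ᵥ b) = b := by
  rw [mulVec_mulVec, mul_nonsing_inv _ ((isUnit_iff_isUnit_det C).mp hC.isUnit), one_mulVec]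

theorem PosDef.inv_mulVec_mulVec (hC : C.PosDef) (b : n → ℝ) : C⁻¹ *ᵥ (C *ᵥ b) = b := by
  rw [mulVec_mulVec, nonsing_inv_mul _ ((isUnit_iff_isUnit_det C).mp hC.isUnit), one_mulVec]

theorem PosDef.dotProduct_inv_mulVec_pos (hC : C.PosDef) {b : n → ℝ} (hb : b ≠ 0) :
    0 < b ⬝ᵥ C⁻¹ *ᵥ b := by
  simpa using hC.inv.dotProduct_mulVec_pos hb

theorem PosDef.dotProduct_le_sqrt_mul_sqrt (hC : C.PosDef) (h b : n → ℝ) :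
    h ⬝ᵥ b ≤ √(b ⬝ᵥ C⁻¹ *ᵥ b) * √(h ⬝ᵥ C *ᵥ h) := by
  set y := C⁻¹ *ᵥ b
  have hCS := hC.posSemidef.dotProduct_mulVec_sq_le h y
  rw [hC.mulVec_inv_mulVec, dotProduct_comm y] at hCS
  calc h ⬝ᵥ b ≤ |h ⬝ᵥ b| := le_abs_self _
    _ ≤ √((h ⬝ᵥ C *ᵥ h) * (b ⬝ᵥ y)) := Real.abs_le_sqrt hCS
    _ = √(b ⬝ᵥ y) * √(h ⬝ᵥ C *ᵥ h) := by
      rw [Real.sqrt_mul (by simpa using hC.posSemidef.dotProduct_mulVec_nonneg h), mul_comm]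

theorem PosDef.exists_pos_mulVec_eq_smul_iff (hC : C.PosDef) {b : n → ℝ} (hb : b ≠ 0)
    (h : n → ℝ) : (∃ c : ℝ, 0 < c ∧ C *ᵥ h = c • b) ↔
      0 < √(h ⬝ᵥ C *ᵥ h) ∧ h ⬝ᵥ b = √(b ⬝ᵥ C⁻¹ *ᵥ b) * √(h ⬝ᵥ C *ᵥ h) := by
  set y := C⁻¹ *ᵥ b
  set Q := b ⬝ᵥ y
  have hQ : 0 < Q := hC.dotProduct_inv_mulVec_pos hb
  have hCy : C *ᵥ y = b := hC.mulVec_inv_mulVec b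
  constructor
  · rintro ⟨c, hc, hCh⟩
    obtain rfl : h = c • y := by rw [← hC.inv_mulVec_mulVec h, hCh, mulVec_smul]
    have hP : c • y ⬝ᵥ C *ᵥ (c • y) = c ^ 2 * Q := by
      rw [mulVec_smul, hCy, smul_dotProduct, dotProduct_smul, dotProduct_comm y, smul_eq_mul,
        smul_eq_mul]
      ring
    rw [hP, Real.sqrt_mul (sq_nonneg c), Real.sqrt_sq hc.le, smul_dotProduct, smul_eq_mul,
      dotProduct_comm y]
    refine ⟨by positivity, ?_⟩
    rw [mul_left_comm, Real.mul_self_sqrt hQ.le]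
  · rintro ⟨hs, heq⟩
    set P := h ⬝ᵥ C *ᵥ h
    have ht : 0 < h ⬝ᵥ b := heq ▸ mul_pos (Real.sqrt_pos.mpr hQ) hs
    have hsq : (h ⬝ᵥ C *ᵥ y) ^ 2 = P * (y ⬝ᵥ C *ᵥ y) := by
      rw [hCy, dotProduct_comm y, heq, mul_pow, Real.sq_sqrt hQ.le,
        Real.sq_sqrt (Real.sqrt_pos.mp hs).le, mul_comm]
    have hpar := hC.smul_eq_smul_of_dotProduct_mulVec_sq_eq hsq
    rw [hCy] at hpar
    have hCpar : (h ⬝ᵥ b) • C *ᵥ h = P • b := by rw [← mulVec_smul, hpar, mulVec_smul, hCy]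
    refine ⟨P / h ⬝ᵥ b, div_pos (Real.sqrt_pos.mp hs) ht, ?_⟩
    rw [div_eq_inv_mul, mul_smul, ← hCpar, inv_smul_smul₀ ht.ne']

end Matrix

theorem stmt2_general {d : ℕ} (C : Matrix (Fin d) (Fin d) ℝ) (hC : C.PosDef)
    (a S₀ : Fin d → ℝ) (γ : ℝ) (hS₀ : S₀ ≠ a)
    (r : ℝ) (hr : r = Real.sqrt ((S₀ - a) ⬝ᵥ (C⁻¹ *ᵥ (S₀ - a))))
    (hrγ : r < γ)
    (RAROC : (Fin d → ℝ) → ℝ)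
    (hRAROC : ∀ h, RAROC h =
      (h ⬝ᵥ (a - S₀)) / (γ * Real.sqrt (h ⬝ᵥ (C *ᵥ h)) - h ⬝ᵥ (a - S₀))) :
    IsGreatest (Set.range RAROC) (r / (γ - r)) ∧
      {h | RAROC h = r / (γ - r)} =
        {h | ∃ c : ℝ, 0 < c ∧ C *ᵥ h = c • (a - S₀)} := by
  have hb : a - S₀ ≠ 0 := sub_ne_zero.mpr hS₀.symm
  have hr_dual : r = √((a - S₀) ⬝ᵥ C⁻¹ *ᵥ (a - S₀)) := by
    rw [hr, ← neg_sub a S₀, mulVec_neg, neg_dotProduct, dotProduct_neg, neg_neg]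
  have hr0 : 0 < r := hr_dual ▸ Real.sqrt_pos.mpr (hC.dotProduct_inv_mulVec_pos hb)
  have hbound (h : Fin d → ℝ) : h ⬝ᵥ (a - S₀) ≤ r * √(h ⬝ᵥ C *ᵥ h) :=
    hr_dual ▸ hC.dotProduct_le_sqrt_mul_sqrt h _
  have hmaximizer (h : Fin d → ℝ) :
      RAROC h = r / (γ - r) ↔ ∃ c : ℝ, 0 < c ∧ C *ᵥ h = c • (a - S₀) := by
    rw [hRAROC, div_mul_sub_eq_div_sub_iff hr0 hrγ (Real.sqrt_nonneg _) (hbound h),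
      hC.exists_pos_mulVec_eq_smul_iff hb, ← hr_dual]
  refine ⟨⟨⟨C⁻¹ *ᵥ (a - S₀), (hmaximizer _).mpr ⟨1, one_pos, ?_⟩⟩, ?_⟩, Set.ext hmaximizer⟩
  · rw [one_smul, hC.mulVec_inv_mulVec]
  · rintro _ ⟨h, rfl⟩
    rw [hRAROC]
    exact div_mul_sub_le_div_sub hr0 hrγ (Real.sqrt_nonneg _) (hbound h)

/-- Gaussian optimization example: with `S₁ ~ N(a, C)`, `PD = {P}`, `H = ℝ^d`,
and a law-invariant coherent utility with `u(N(m,σ²)) = m - γσ`, the maximal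
RAROC equals `r/(γ - r)` with `r = ⟨S₀-a, C⁻¹(S₀-a)⟩^{1/2}`, and the maximizers
are exactly `{h : C h = c (a - S₀), c > 0}`. -/
theorem stmt2 {d : ℕ} (C : Matrix (Fin d) (Fin d) ℝ) (hC : C.PosDef)
    (a S₀ : Fin d → ℝ) (γ : ℝ) (hγ : 0 < γ) (hS₀ : S₀ ≠ a)
    (r : ℝ) (hr : r = Real.sqrt ((S₀ - a) ⬝ᵥ (C⁻¹ *ᵥ (S₀ - a))))
    (hrγ : r < γ)
    (RAROC : (Fin d → ℝ) → ℝ)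
    (hRAROC : ∀ h, RAROC h =
      (h ⬝ᵥ (a - S₀)) / (γ * Real.sqrt (h ⬝ᵥ (C *ᵥ h)) - h ⬝ᵥ (a - S₀))) :
    IsGreatest (Set.range RAROC) (r / (γ - r)) ∧
      {h | RAROC h = r / (γ - r)} =
        {h | ∃ c : ℝ, 0 < c ∧ C *ᵥ h = c • (a - S₀)} :=
  stmt2_general C hC a S₀ γ hS₀ r hr hrγ RAROC hRAROC
end

section
/- lim_{v→∞} V̄(F,v) ≤ sup_{Q∈D} E_Q F, and if sup_{X∈A, Q∈D} |E_Q X| < ∞ then lim_{v→∞} V̄(F,v) = sup_{Q∈D} E_Q F. -/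
/-!
Write `u Y = min_{Q ∈ D} E_Q Y`, let `m` and `S` be the minimum and the maximum of `E_Q F` over
`Q ∈ D` (both attained, since `D` attains every such minimum), and
`T(v) = sup_{X ∈ A} u(-vF + X)`, so that `V̄(F,v) = -T(v)/v`.
Testing with `X = 0` gives `T(v) ≥ -vS`. For any `X ∈ A`, evaluating `u(-vF + X)` at a measure
realising `u X ≤ 0` gives `T(v) ≤ -vm`; evaluating it at the maximiser of `E_Q F` gives
`T(v) ≤ -vS + M` when `|E_Q X| ≤ M`. Hence `m ≤ V̄(F,v) ≤ S` and, under the bound,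
`S - M/v ≤ V̄(F,v)`. The lower bound `m` is what makes `V̄` cobounded, without which `limsup`
would take a junk value.
-/

open MeasureTheory Set Filter Topology

theorem integral_neg_const_mul_add {Ω : Type*} [MeasurableSpace Ω] {Q : Measure Ω}
    {F X : Ω → ℝ} (hF : Integrable F Q) (hX : Integrable X Q) (v : ℝ) :
    ∫ ω, -(v * F ω) + X ω ∂Q = -(v * ∫ ω, F ω ∂Q) + ∫ ω, X ω ∂Q := by
  rw [integral_add (f := fun ω => -(v * F ω)) (hF.const_mul v).neg hX, integral_neg,
    integral_const_mul]

namespace Liquidity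

variable {Ω : Type*} [MeasurableSpace Ω] {D : Set (Measure Ω)} {A : Set (Ω → ℝ)}
  {F X Y : Ω → ℝ} {Q : Measure Ω} {m S M v : ℝ}

def AttainsInfIntegral (D : Set (Measure Ω)) : Prop :=
  ∀ Y : Ω → ℝ, (∀ Q ∈ D, Integrable Y Q) → ∃ Q ∈ D, ∀ Q' ∈ D, ∫ ω, Y ω ∂Q ≤ ∫ ω, Y ω ∂Q'

noncomputable def infExpectation (D : Set (Measure Ω)) (Y : Ω → ℝ) : ℝ :=
  sInf {r | ∃ Q ∈ D, r = ∫ ω, Y ω ∂Q}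

noncomputable def hedgedValue (D : Set (Measure Ω)) (A : Set (Ω → ℝ)) (F : Ω → ℝ) (v : ℝ) : ℝ :=
  sSup {r | ∃ X ∈ A, r = infExpectation D (fun ω => -(v * F ω) + X ω)}

theorem hedgedValue_le_of_forall_le {c : ℝ} (hA0 : (0 : Ω → ℝ) ∈ A)
    (h : ∀ X ∈ A, infExpectation D (fun ω => -(v * F ω) + X ω) ≤ c) : hedgedValue D A F v ≤ c :=
  csSup_le ⟨_, 0, hA0, rfl⟩ (by rintro r ⟨X, hX, rfl⟩; exact h X hX)

theorem le_hedgedValue_of_forall_le {c : ℝ}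
    (h : ∀ X ∈ A, infExpectation D (fun ω => -(v * F ω) + X ω) ≤ c) (hX : X ∈ A) :
    infExpectation D (fun ω => -(v * F ω) + X ω) ≤ hedgedValue D A F v :=
  le_csSup ⟨c, by rintro r ⟨X, hX, rfl⟩; exact h X hX⟩ ⟨X, hX, rfl⟩

theorem AttainsInfIntegral.exists_isLeast (hD : AttainsInfIntegral D)
    (hY : ∀ Q ∈ D, Integrable Y Q) : ∃ m, IsLeast {r | ∃ Q ∈ D, r = ∫ ω, Y ω ∂Q} m := by
  obtain ⟨Q, hQ, hmin⟩ := hD Y hY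
  exact ⟨_, ⟨Q, hQ, rfl⟩, by rintro r ⟨Q', hQ', rfl⟩; exact hmin Q' hQ'⟩

theorem AttainsInfIntegral.exists_isGreatest (hD : AttainsInfIntegral D)
    (hY : ∀ Q ∈ D, Integrable Y Q) : ∃ S, IsGreatest {r | ∃ Q ∈ D, r = ∫ ω, Y ω ∂Q} S := by
  obtain ⟨m, ⟨Q, hQ, hmQ⟩, hm⟩ := hD.exists_isLeast fun Q hQ => (hY Q hQ).neg
  simp only [Pi.neg_apply, integral_neg] at hmQ
  refine ⟨-m, ⟨Q, hQ, by rw [hmQ, neg_neg]⟩, ?_⟩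
  rintro r ⟨Q', hQ', rfl⟩
  have := hm ⟨Q', hQ', rfl⟩
  simp only [Pi.neg_apply, integral_neg] at this
  linarith

theorem AttainsInfIntegral.exists_infExpectation_eq (hD : AttainsInfIntegral D)
    (hY : ∀ Q ∈ D, Integrable Y Q) : ∃ Q ∈ D, infExpectation D Y = ∫ ω, Y ω ∂Q := by
  obtain ⟨m, hm⟩ := hD.exists_isLeast hY
  obtain ⟨Q, hQ, rfl⟩ := hm.1
  exact ⟨Q, hQ, hm.csInf_eq⟩

theorem AttainsInfIntegral.infExpectation_le_integral (hD : AttainsInfIntegral D)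
    (hY : ∀ Q ∈ D, Integrable Y Q) (hQ : Q ∈ D) : infExpectation D Y ≤ ∫ ω, Y ω ∂Q := by
  obtain ⟨m, hm⟩ := hD.exists_isLeast hY
  exact csInf_le hm.bddBelow ⟨Q, hQ, rfl⟩

section Bounds

variable (hD : AttainsInfIntegral D) (hF : ∀ Q ∈ D, Integrable F Q)
include hD hF

theorem neg_mul_le_infExpectation (hv : 0 ≤ v) (hS : ∀ Q ∈ D, ∫ ω, F ω ∂Q ≤ S) :
    -(v * S) ≤ infExpectation D (fun ω => -(v * F ω) + (0 : Ω → ℝ) ω) := by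
  have hY : ∀ Q ∈ D, Integrable (fun ω => -(v * F ω) + (0 : Ω → ℝ) ω) Q :=
    fun Q hQ => ((hF Q hQ).const_mul v).neg.add (integrable_zero _ _ _)
  obtain ⟨Q, hQ, hQeq⟩ := hD.exists_infExpectation_eq hY
  rw [hQeq, integral_neg_const_mul_add (hF Q hQ) (integrable_zero _ _ _)]
  simp only [Pi.zero_apply, integral_zero, add_zero]
  nlinarith [hS Q hQ]

theorem infExpectation_le_neg_mul (hv : 0 ≤ v) (hm : ∀ Q ∈ D, m ≤ ∫ ω, F ω ∂Q)
    (hX : ∀ Q ∈ D, Integrable X Q) (hNGD : infExpectation D X ≤ 0) :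
    infExpectation D (fun ω => -(v * F ω) + X ω) ≤ -(v * m) := by
  obtain ⟨Q, hQ, hQeq⟩ := hD.exists_infExpectation_eq hX
  calc infExpectation D (fun ω => -(v * F ω) + X ω)
      ≤ ∫ ω, -(v * F ω) + X ω ∂Q :=
        hD.infExpectation_le_integral (fun Q hQ => ((hF Q hQ).const_mul v).neg.add (hX Q hQ)) hQ
    _ = -(v * ∫ ω, F ω ∂Q) + infExpectation D X := by
        rw [integral_neg_const_mul_add (hF Q hQ) (hX Q hQ), hQeq]
    _ ≤ -(v * m) := by nlinarith [hm Q hQ]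

theorem infExpectation_le_neg_mul_add (hQ : Q ∈ D) (hX : ∀ Q ∈ D, Integrable X Q)
    (hM : |∫ ω, X ω ∂Q| ≤ M) :
    infExpectation D (fun ω => -(v * F ω) + X ω) ≤ -(v * ∫ ω, F ω ∂Q) + M := by
  calc infExpectation D (fun ω => -(v * F ω) + X ω)
      ≤ ∫ ω, -(v * F ω) + X ω ∂Q :=
        hD.infExpectation_le_integral (fun Q hQ => ((hF Q hQ).const_mul v).neg.add (hX Q hQ)) hQ
    _ = -(v * ∫ ω, F ω ∂Q) + ∫ ω, X ω ∂Q := integral_neg_const_mul_add (hF Q hQ) (hX Q hQ) v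
    _ ≤ -(v * ∫ ω, F ω ∂Q) + M := by linarith [le_of_abs_le hM]

variable (hA0 : (0 : Ω → ℝ) ∈ A) (hAint : ∀ Q ∈ D, ∀ X ∈ A, Integrable X Q)
include hA0 hAint

theorem le_neg_hedgedValue_div (hv : 0 < v) (hm : ∀ Q ∈ D, m ≤ ∫ ω, F ω ∂Q)
    (hNGD : ∀ X ∈ A, infExpectation D X ≤ 0) : m ≤ -hedgedValue D A F v / v := by
  have hT : hedgedValue D A F v ≤ -(v * m) := hedgedValue_le_of_forall_le hA0 fun X hX =>
    infExpectation_le_neg_mul hD hF hv.le hm (fun Q hQ => hAint Q hQ X hX) (hNGD X hX)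
  rw [le_div_iff₀ hv]
  linarith

theorem neg_hedgedValue_div_le (hv : 0 < v) (hm : ∀ Q ∈ D, m ≤ ∫ ω, F ω ∂Q)
    (hS : ∀ Q ∈ D, ∫ ω, F ω ∂Q ≤ S) (hNGD : ∀ X ∈ A, infExpectation D X ≤ 0) :
    -hedgedValue D A F v / v ≤ S := by
  have hT : -(v * S) ≤ hedgedValue D A F v :=
    (neg_mul_le_infExpectation hD hF hv.le hS).trans <| le_hedgedValue_of_forall_le
      (fun X hX => infExpectation_le_neg_mul hD hF hv.le hm (fun Q hQ => hAint Q hQ X hX)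
        (hNGD X hX)) hA0
  rw [div_le_iff₀ hv]
  linarith

theorem sub_div_le_neg_hedgedValue_div (hv : 0 < v) (hQ : Q ∈ D)
    (hM : ∀ X ∈ A, |∫ ω, X ω ∂Q| ≤ M) :
    ∫ ω, F ω ∂Q - M / v ≤ -hedgedValue D A F v / v := by
  have hT : hedgedValue D A F v ≤ -(v * ∫ ω, F ω ∂Q) + M := hedgedValue_le_of_forall_le hA0
    fun X hX => infExpectation_le_neg_mul_add hD hF hQ (fun Q hQ => hAint Q hQ X hX) (hM X hX)
  rw [sub_div' hv.ne', div_le_div_iff_of_pos_right hv]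
  linarith

end Bounds

end Liquidity

open Liquidity in
theorem stmt10_general {Ω : Type*} [MeasurableSpace Ω]
    (D : Set (Measure Ω))
    (hDcomp : ∀ Y : Ω → ℝ, (∀ Q ∈ D, Integrable Y Q) →
      ∃ Q ∈ D, ∀ Q' ∈ D, ∫ ω, Y ω ∂Q ≤ ∫ ω, Y ω ∂Q')
    (A : Set (Ω → ℝ)) (hA0 : (0 : Ω → ℝ) ∈ A)
    (hAint : ∀ Q ∈ D, ∀ X ∈ A, Integrable X Q)
    (F : Ω → ℝ) (hF : ∀ Q ∈ D, Integrable F Q)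
    (u : (Ω → ℝ) → ℝ)
    (hu : ∀ Y, u Y = sInf {r | ∃ Q ∈ D, r = ∫ ω, Y ω ∂Q})
    (hNGD : ∀ X ∈ A, u X ≤ 0)
    (Vbar : ℝ → ℝ)
    (hV : ∀ v, Vbar v =
      -(sSup {r | ∃ X ∈ A, r = u (fun ω => -(v * F ω) + X ω)}) / v) :
    limsup Vbar atTop ≤ sSup {r | ∃ Q ∈ D, r = ∫ ω, F ω ∂Q} ∧
    ((∃ M : ℝ, ∀ X ∈ A, ∀ Q ∈ D, |∫ ω, X ω ∂Q| ≤ M) →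
      Tendsto Vbar atTop (𝓝 (sSup {r | ∃ Q ∈ D, r = ∫ ω, F ω ∂Q}))) := by
  obtain rfl : u = infExpectation D := funext hu
  have hV' : ∀ v, Vbar v = -hedgedValue D A F v / v := hV
  obtain ⟨S, hS⟩ := AttainsInfIntegral.exists_isGreatest hDcomp hF
  obtain ⟨m, hm⟩ := AttainsInfIntegral.exists_isLeast hDcomp hF
  have hSle : ∀ Q ∈ D, ∫ ω, F ω ∂Q ≤ S := fun Q hQ => hS.2 ⟨Q, hQ, rfl⟩
  have hmle : ∀ Q ∈ D, m ≤ ∫ ω, F ω ∂Q := fun Q hQ => hm.2 ⟨Q, hQ, rfl⟩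
  have hupper : ∀ᶠ v in atTop, Vbar v ≤ S := (eventually_gt_atTop 0).mono fun v hv =>
    hV' v ▸ neg_hedgedValue_div_le hDcomp hF hA0 hAint hv hmle hSle hNGD
  rw [hS.csSup_eq]
  refine ⟨?_, ?_⟩
  · have hlower : ∀ᶠ v in atTop, m ≤ Vbar v := (eventually_gt_atTop 0).mono fun v hv =>
      hV' v ▸ le_neg_hedgedValue_div hDcomp hF hA0 hAint hv hmle hNGD
    exact limsup_le_of_le (isCoboundedUnder_le_of_eventually_le atTop hlower) hupper
  · rintro ⟨M, hM⟩
    obtain ⟨Q, hQ, rfl⟩ := hS.1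
    have hlim : Tendsto (fun v : ℝ => ∫ ω, F ω ∂Q - M / v) atTop (𝓝 (∫ ω, F ω ∂Q)) := by
      simpa using tendsto_const_nhds.sub ((tendsto_const_nhds (x := M)).div_atTop tendsto_id)
    refine tendsto_of_tendsto_of_tendsto_of_le_of_le' hlim tendsto_const_nhds ?_ hupper
    exact (eventually_gt_atTop 0).mono fun v hv =>
      hV' v ▸ sub_div_le_neg_hedgedValue_div hDcomp hF hA0 hAint hv hQ fun X hX => hM X hX Q hQ

/-- As the trade volume tends to infinity:
`lim_{v→∞} V̄(F,v) ≤ sup_{Q∈D} E_Q F`, and if `sup_{X∈A,Q∈D}|E_Q X| < ∞` then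
`lim_{v→∞} V̄(F,v) = sup_{Q∈D} E_Q F`. -/
theorem stmt10 {Ω : Type*} [MeasurableSpace Ω]
    (P : Measure Ω) [IsProbabilityMeasure P]
    (D : Set (Measure Ω)) (hDne : D.Nonempty)
    (hDprob : ∀ Q ∈ D, IsProbabilityMeasure Q)
    (hDac : ∀ Q ∈ D, Q ≪ P)
    (hDcomp : ∀ Y : Ω → ℝ, (∀ Q ∈ D, Integrable Y Q) →
      ∃ Q ∈ D, ∀ Q' ∈ D, ∫ ω, Y ω ∂Q ≤ ∫ ω, Y ω ∂Q')
    (A : Set (Ω → ℝ)) (hA0 : (0 : Ω → ℝ) ∈ A) (hAconv : Convex ℝ A)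
    (hAint : ∀ Q ∈ D, ∀ X ∈ A, Integrable X Q)
    (F : Ω → ℝ) (hF : ∀ Q ∈ D, Integrable F Q)
    (u : (Ω → ℝ) → ℝ)
    (hu : ∀ Y, u Y = sInf {r | ∃ Q ∈ D, r = ∫ ω, Y ω ∂Q})
    (hNGD : ∀ X ∈ A, u X ≤ 0)
    (Vbar : ℝ → ℝ)
    (hV : ∀ v, Vbar v =
      -(sSup {r | ∃ X ∈ A, r = u (fun ω => -(v * F ω) + X ω)}) / v) :
    limsup Vbar atTop ≤ sSup {r | ∃ Q ∈ D, r = ∫ ω, F ω ∂Q} ∧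
    ((∃ M : ℝ, ∀ X ∈ A, ∀ Q ∈ D, |∫ ω, X ω ∂Q| ≤ M) →
      Tendsto Vbar atTop (𝓝 (sSup {r | ∃ Q ∈ D, r = ∫ ω, F ω ∂Q}))) :=
  stmt10_general D hDcomp A hA0 hAint F hF u hu hNGD Vbar hV
end

section
/- If X* maximizes RAROC over A, then D* ∩ R = ((1/(1+R*)) X_PD(X*) + (R*/(1+R*)) X_RD(X*)) ∩ R, where X_PD(X*) and X_RD(X*) are the sets of measures attaining the respective infima at X*. -/
open MeasureTheory Set
open scoped Classical

/-!
Write `p` and `r` for the infima of `E_Q X*` over `PD` and `RD`. The finite value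
`R* = RAROC X* = p / (-r)` gives `p + R* r = 0`, so for a mixture
`Q = Q₁/(1+R*) + R* Q₂/(1+R*)` with `Q₁ ∈ PD`, `Q₂ ∈ RD` the bounds `E_{Q₁} X* ≥ p` and
`E_{Q₂} X* ≥ r` combine to `E_Q X* ≥ 0`. If `Q ∈ R` then also `E_Q X* ≤ 0`, forcing equality in
both bounds. Since `R* ≠ 0`, neither `p` nor `r` is the junk value `0` of `sInf` on a set
unbounded below, so they are genuine lower bounds.
-/

lemma Real.sInf_le_of_sInf_ne_zero {S : Set ℝ} (hS : sInf S ≠ 0) {x : ℝ} (hx : x ∈ S) :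
    sInf S ≤ x :=
  csInf_le (not_not.mp fun h ↦ hS (Real.sInf_of_not_bddBelow h)) hx

lemma eq_of_ite_top_eq_coe {c : Prop} [Decidable c] {x y : ℝ}
    (h : (if c then ⊤ else (x : EReal)) = y) : x = y := by
  split_ifs at h
  · exact absurd h (EReal.top_ne_coe y)
  · exact_mod_cast h

lemma one_div_one_add_mul_add_div_one_add_mul_eq_zero {p r R : ℝ} (hR : 0 < R)
    (hr : -r ≠ 0) (hpr : p / -r = R) :
    1 / (1 + R) * p + R / (1 + R) * r = 0 := by
  have hp : p = R * -r := (div_eq_iff hr).mp hpr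
  rw [hp]
  field_simp
  ring

lemma eq_and_eq_of_weighted_sum_le {a b p r x y : ℝ} (ha : 0 < a) (hb : 0 < b)
    (hpx : p ≤ x) (hry : r ≤ y) (h : a * x + b * y ≤ a * p + b * r) : x = p ∧ y = r := by
  have hx : a * p ≤ a * x := mul_le_mul_of_nonneg_left hpx ha.le
  have hy : b * r ≤ b * y := mul_le_mul_of_nonneg_left hry hb.le
  exact ⟨le_antisymm (le_of_mul_le_mul_left (by linarith) ha) hpx,
    le_antisymm (le_of_mul_le_mul_left (by linarith) hb) hry⟩

lemma MeasureTheory.integral_ofReal_smul_add_ofReal_smul {Ω : Type*} [MeasurableSpace Ω]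
    {μ ν : Measure Ω} {f : Ω → ℝ} (hμ : Integrable f μ) (hν : Integrable f ν)
    {a b : ℝ} (ha : 0 ≤ a) (hb : 0 ≤ b) :
    ∫ ω, f ω ∂(ENNReal.ofReal a • μ + ENNReal.ofReal b • ν) =
      a * ∫ ω, f ω ∂μ + b * ∫ ω, f ω ∂ν := by
  rw [integral_add_measure (hμ.smul_measure ENNReal.ofReal_ne_top)
      (hν.smul_measure ENNReal.ofReal_ne_top), integral_smul_measure, integral_smul_measure,
    ENNReal.toReal_ofReal ha, ENNReal.toReal_ofReal hb, smul_eq_mul, smul_eq_mul]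

theorem stmt12_general {Ω : Type*} [MeasurableSpace Ω]
    (P : Measure Ω)
    (PD RD : Set (Measure Ω)) (hPDRD : PD ⊆ RD)
    (A : Set (Ω → ℝ))
    (hAint : ∀ Q ∈ RD, ∀ X ∈ A, Integrable X Q)
    (RAROC : (Ω → ℝ) → EReal)
    (hRAROC : ∀ Y, RAROC Y =
      if 0 < sInf {r | ∃ Q ∈ PD, r = ∫ ω, Y ω ∂Q} ∧
          0 ≤ sInf {r | ∃ Q ∈ RD, r = ∫ ω, Y ω ∂Q}
      then (⊤ : EReal)
      else ((sInf {r | ∃ Q ∈ PD, r = ∫ ω, Y ω ∂Q} /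
        (-(sInf {r | ∃ Q ∈ RD, r = ∫ ω, Y ω ∂Q})) : ℝ) : EReal))
    (Rstar : ℝ) (hRstar0 : 0 < Rstar)
    (Xstar : Ω → ℝ) (hXstarA : Xstar ∈ A)
    (hXstarVal : RAROC Xstar = (Rstar : EReal))
    (Dstar : Set (Measure Ω))
    (hDstar : Dstar = {Q | ∃ Q₁ ∈ PD, ∃ Q₂ ∈ RD,
      Q = (ENNReal.ofReal (1 / (1 + Rstar)) • Q₁ +
        ENNReal.ofReal (Rstar / (1 + Rstar)) • Q₂ : Measure Ω)})
    (R : Set (Measure Ω))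
    (hR : R = {Q | IsProbabilityMeasure Q ∧ Q ≪ P ∧ ∀ X ∈ A, ∫ ω, X ω ∂Q ≤ 0})
    (XPD XRD : Set (Measure Ω))
    (hXPD : XPD = {Q ∈ PD | ∫ ω, Xstar ω ∂Q = sInf {r | ∃ Q' ∈ PD, r = ∫ ω, Xstar ω ∂Q'}})
    (hXRD : XRD = {Q ∈ RD | ∫ ω, Xstar ω ∂Q = sInf {r | ∃ Q' ∈ RD, r = ∫ ω, Xstar ω ∂Q'}}) :
    Dstar ∩ R =
      {Q | ∃ Q₁ ∈ XPD, ∃ Q₂ ∈ XRD,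
        Q = (ENNReal.ofReal (1 / (1 + Rstar)) • Q₁ +
          ENNReal.ofReal (Rstar / (1 + Rstar)) • Q₂ : Measure Ω)} ∩ R := by
  subst hDstar hR hXPD hXRD
  set p := sInf {r | ∃ Q' ∈ PD, r = ∫ ω, Xstar ω ∂Q'}
  set r := sInf {r | ∃ Q' ∈ RD, r = ∫ ω, Xstar ω ∂Q'}
  have hval : p / -r = Rstar := eq_of_ite_top_eq_coe ((hRAROC Xstar).symm.trans hXstarVal)
  obtain ⟨hp, hr⟩ : p ≠ 0 ∧ -r ≠ 0 := div_ne_zero_iff.mp (hval ▸ hRstar0.ne')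
  have ha : 0 < 1 / (1 + Rstar) := by positivity
  have hb : 0 < Rstar / (1 + Rstar) := by positivity
  ext Q
  constructor
  · rintro ⟨⟨Q₁, hQ₁, Q₂, hQ₂, rfl⟩, hQR⟩
    have hle := hQR.2.2 Xstar hXstarA
    rw [integral_ofReal_smul_add_ofReal_smul (hAint Q₁ (hPDRD hQ₁) Xstar hXstarA)
      (hAint Q₂ hQ₂ Xstar hXstarA) ha.le hb.le] at hle
    obtain ⟨h₁, h₂⟩ := eq_and_eq_of_weighted_sum_le ha hb
      (Real.sInf_le_of_sInf_ne_zero hp ⟨Q₁, hQ₁, rfl⟩)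
      (Real.sInf_le_of_sInf_ne_zero (neg_ne_zero.mp hr) ⟨Q₂, hQ₂, rfl⟩)
      (hle.trans (one_div_one_add_mul_add_div_one_add_mul_eq_zero hRstar0 hr hval).ge)
    exact ⟨⟨Q₁, ⟨hQ₁, h₁⟩, Q₂, ⟨hQ₂, h₂⟩, rfl⟩, hQR⟩
  · rintro ⟨⟨Q₁, hQ₁, Q₂, hQ₂, rfl⟩, hQR⟩
    exact ⟨⟨Q₁, hQ₁.1, Q₂, hQ₂.1, rfl⟩, hQR⟩

/-- If `X*` maximizes RAROC over `A`, then
`D* ∩ R = ((1/(1+R*)) X_PD(X*) + (R*/(1+R*)) X_RD(X*)) ∩ R`, where `X_PD(X*)`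
and `X_RD(X*)` are the sets of measures attaining the respective infima at `X*`. -/
theorem stmt12 {Ω : Type*} [MeasurableSpace Ω]
    (P : Measure Ω) [IsProbabilityMeasure P]
    (PD RD : Set (Measure Ω)) (hPDRD : PD ⊆ RD)
    (hRDne : RD.Nonempty) (hPDne : PD.Nonempty)
    (hRDprob : ∀ Q ∈ RD, IsProbabilityMeasure Q)
    (hRDac : ∀ Q ∈ RD, Q ≪ P)
    (hRDconv : ∀ Q₁ ∈ RD, ∀ Q₂ ∈ RD, ∀ t : ℝ, 0 ≤ t → t ≤ 1 →
      (ENNReal.ofReal t • Q₁ + ENNReal.ofReal (1 - t) • Q₂ : Measure Ω) ∈ RD)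
    (hPDconv : ∀ Q₁ ∈ PD, ∀ Q₂ ∈ PD, ∀ t : ℝ, 0 ≤ t → t ≤ 1 →
      (ENNReal.ofReal t • Q₁ + ENNReal.ofReal (1 - t) • Q₂ : Measure Ω) ∈ PD)
    (A : Set (Ω → ℝ)) (hA0 : (0 : Ω → ℝ) ∈ A) (hAconv : Convex ℝ A)
    (hAint : ∀ Q ∈ RD, ∀ X ∈ A, Integrable X Q)
    (RAROC : (Ω → ℝ) → EReal)
    (hRAROC : ∀ Y, RAROC Y =
      if 0 < sInf {r | ∃ Q ∈ PD, r = ∫ ω, Y ω ∂Q} ∧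
          0 ≤ sInf {r | ∃ Q ∈ RD, r = ∫ ω, Y ω ∂Q}
      then (⊤ : EReal)
      else ((sInf {r | ∃ Q ∈ PD, r = ∫ ω, Y ω ∂Q} /
        (-(sInf {r | ∃ Q ∈ RD, r = ∫ ω, Y ω ∂Q})) : ℝ) : EReal))
    (Rstar : ℝ) (hRstar0 : 0 < Rstar)
    (Xstar : Ω → ℝ) (hXstarA : Xstar ∈ A)
    (hXstarMax : ∀ X ∈ A, RAROC X ≤ RAROC Xstar)
    (hXstarVal : RAROC Xstar = (Rstar : EReal))
    (Dstar : Set (Measure Ω))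
    (hDstar : Dstar = {Q | ∃ Q₁ ∈ PD, ∃ Q₂ ∈ RD,
      Q = (ENNReal.ofReal (1 / (1 + Rstar)) • Q₁ +
        ENNReal.ofReal (Rstar / (1 + Rstar)) • Q₂ : Measure Ω)})
    (R : Set (Measure Ω))
    (hR : R = {Q | IsProbabilityMeasure Q ∧ Q ≪ P ∧ ∀ X ∈ A, ∫ ω, X ω ∂Q ≤ 0})
    (XPD XRD : Set (Measure Ω))
    (hXPD : XPD = {Q ∈ PD | ∫ ω, Xstar ω ∂Q = sInf {r | ∃ Q' ∈ PD, r = ∫ ω, Xstar ω ∂Q'}})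
    (hXRD : XRD = {Q ∈ RD | ∫ ω, Xstar ω ∂Q = sInf {r | ∃ Q' ∈ RD, r = ∫ ω, Xstar ω ∂Q'}}) :
    Dstar ∩ R =
      {Q | ∃ Q₁ ∈ XPD, ∃ Q₂ ∈ XRD,
        Q = (ENNReal.ofReal (1 / (1 + Rstar)) • Q₁ +
          ENNReal.ofReal (Rstar / (1 + Rstar)) • Q₂ : Measure Ω)} ∩ R :=
  stmt12_general P PD RD hPDRD A hAint RAROC hRAROC Rstar hRstar0 Xstar hXstarA hXstarVal Dstar
    hDstar R hR XPD XRD hXPD hXRD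
end

section
/- If (W,F) is jointly Gaussian and u is a law-invariant coherent utility finite on Gaussian variables with u(Gaussian(m,σ²)) = m − γσ, and W is optimal for the agent, then the single-agent NBC price set of F is the singleton {E F − γ·cov(F,W)/√(var W)}. -/
/-!
With `u` the worst-case expectation over `D`, the value of `W + t (F - x)` is the Gaussian
functional `μW + t (μF - x) - γ √(vW + 2 t c + t² vF)`. If `x` is an NBC price this is maximal at
`t = 0`, so its derivative `μF - x - γ c / √vW` vanishes. Conversely, at that price the functional
loses only `O(t²)` near `t = 0`. For any trade `X + h (F - x)` and small `l > 0`, the portfolio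
`W + l X`, which cannot beat `W`, is a convex combination of `W` plus a hedge of size `O(l)` in
`F - x` and `W` plus the trade; concavity of `u` then bounds the gain of the trade by `O(l)`.
-/

open MeasureTheory ProbabilityTheory Set Filter Topology

section WorstCaseExpectation

variable {Ω : Type*} [MeasurableSpace Ω]

noncomputable def worstCaseExpectation (D : Set (Measure Ω)) (Y : Ω → ℝ) : ℝ :=
  sInf {r | ∃ Q ∈ D, r = ∫ ω, Y ω ∂Q}

def AttainsInfima (D : Set (Measure Ω)) : Prop :=
  ∀ Y : Ω → ℝ, (∀ Q ∈ D, Integrable Y Q) → ∃ Q ∈ D, ∀ Q' ∈ D, ∫ ω, Y ω ∂Q ≤ ∫ ω, Y ω ∂Q'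

variable {D : Set (Measure Ω)} {Y : Ω → ℝ}

theorem isLeast_worstCaseExpectation (hD : AttainsInfima D) (hY : ∀ Q ∈ D, Integrable Y Q) :
    IsLeast {r | ∃ Q ∈ D, r = ∫ ω, Y ω ∂Q} (worstCaseExpectation D Y) := by
  obtain ⟨Q₀, hQ₀, hmin⟩ := hD Y hY
  have h : IsLeast {r | ∃ Q ∈ D, r = ∫ ω, Y ω ∂Q} (∫ ω, Y ω ∂Q₀) :=
    ⟨⟨Q₀, hQ₀, rfl⟩, by rintro _ ⟨Q, hQ, rfl⟩; exact hmin Q hQ⟩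
  rwa [worstCaseExpectation, h.csInf_eq]

theorem worstCaseExpectation_le_integral (hD : AttainsInfima D)
    (hY : ∀ Q ∈ D, Integrable Y Q) {Q : Measure Ω} (hQ : Q ∈ D) :
    worstCaseExpectation D Y ≤ ∫ ω, Y ω ∂Q :=
  (isLeast_worstCaseExpectation hD hY).2 ⟨Q, hQ, rfl⟩

theorem exists_worstCaseExpectation_eq_integral (hD : AttainsInfima D)
    (hY : ∀ Q ∈ D, Integrable Y Q) : ∃ Q ∈ D, worstCaseExpectation D Y = ∫ ω, Y ω ∂Q :=
  (isLeast_worstCaseExpectation hD hY).1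

theorem worstCaseExpectation_add_const (hD : AttainsInfima D)
    (hprob : ∀ Q ∈ D, IsProbabilityMeasure Q) (hY : ∀ Q ∈ D, Integrable Y Q) (c : ℝ) :
    worstCaseExpectation D (fun ω => Y ω + c) = worstCaseExpectation D Y + c := by
  have integral_eq : ∀ Q ∈ D, ∫ ω, (Y ω + c) ∂Q = ∫ ω, Y ω ∂Q + c := fun Q hQ => by
    have := hprob Q hQ
    rw [integral_add (hY Q hQ) (integrable_const c), integral_const, probReal_univ, one_smul]
  have hYc : ∀ Q ∈ D, Integrable (fun ω => Y ω + c) Q := fun Q hQ => by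
    have := hprob Q hQ
    exact (hY Q hQ).add (integrable_const c)
  obtain ⟨Q₀, hQ₀, hQ₀eq⟩ := exists_worstCaseExpectation_eq_integral hD hY
  obtain ⟨Q₁, hQ₁, hQ₁eq⟩ := exists_worstCaseExpectation_eq_integral hD hYc
  apply le_antisymm
  · calc worstCaseExpectation D (fun ω => Y ω + c) ≤ ∫ ω, (Y ω + c) ∂Q₀ :=
          worstCaseExpectation_le_integral hD hYc hQ₀
      _ = worstCaseExpectation D Y + c := by rw [integral_eq Q₀ hQ₀, hQ₀eq]
  · rw [hQ₁eq, integral_eq Q₁ hQ₁]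
    gcongr
    exact worstCaseExpectation_le_integral hD hY hQ₁

theorem mul_add_mul_le_worstCaseExpectation (hD : AttainsInfima D) {Y₁ Y₂ : Ω → ℝ}
    (h₁ : ∀ Q ∈ D, Integrable Y₁ Q) (h₂ : ∀ Q ∈ D, Integrable Y₂ Q) {a b : ℝ}
    (ha : 0 ≤ a) (hb : 0 ≤ b) :
    a * worstCaseExpectation D Y₁ + b * worstCaseExpectation D Y₂ ≤
      worstCaseExpectation D (fun ω => a * Y₁ ω + b * Y₂ ω) := by
  have hY : ∀ Q ∈ D, Integrable (fun ω => a * Y₁ ω + b * Y₂ ω) Q := fun Q hQ =>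
    ((h₁ Q hQ).const_mul a).add ((h₂ Q hQ).const_mul b)
  obtain ⟨Q, hQ, hQeq⟩ := exists_worstCaseExpectation_eq_integral hD hY
  rw [hQeq, integral_add ((h₁ Q hQ).const_mul a) ((h₂ Q hQ).const_mul b), integral_const_mul,
    integral_const_mul]
  gcongr
  exacts [worstCaseExpectation_le_integral hD h₁ hQ, worstCaseExpectation_le_integral hD h₂ hQ]

theorem nonpos_of_forall_le_mul_div_one_sub {d C : ℝ}
    (h : ∀ l : ℝ, 0 < l → l < 1 → d ≤ C * l / (1 - l)) : d ≤ 0 := by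
  have hlim : Tendsto (fun l : ℝ => C * l / (1 - l)) (𝓝[>] 0) (𝓝 0) := by
    have hcont : ContinuousAt (fun l : ℝ => C * l / (1 - l)) 0 := by
      fun_prop (disch := norm_num)
    simpa using hcont.tendsto.mono_left nhdsWithin_le_nhds
  refine ge_of_tendsto hlim ?_
  filter_upwards [Ioo_mem_nhdsGT one_pos] with l hl using h l hl.1 hl.2

theorem worstCaseExpectation_le_of_quadratic_loss (hD : AttainsInfima D) {A : Set (Ω → ℝ)}
    (hA0 : (0 : Ω → ℝ) ∈ A) (hAconv : Convex ℝ A) (hAint : ∀ Q ∈ D, ∀ X ∈ A, Integrable X Q)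
    {W G : Ω → ℝ} (hW : ∀ Q ∈ D, Integrable W Q) (hG : ∀ Q ∈ D, Integrable G Q)
    (hWopt : ∀ X ∈ A, worstCaseExpectation D (fun ω => W ω + X ω) ≤ worstCaseExpectation D W)
    {K : ℝ} (hK : ∀ τ : ℝ,
      worstCaseExpectation D W - worstCaseExpectation D (fun ω => W ω + τ * G ω) ≤ K * τ ^ 2)
    {X : Ω → ℝ} (hX : X ∈ A) (h : ℝ) :
    worstCaseExpectation D (fun ω => W ω + X ω + h * G ω) ≤ worstCaseExpectation D W := by
  set u := worstCaseExpectation D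
  rw [← sub_nonpos]
  refine nonpos_of_forall_le_mul_div_one_sub (C := K * h ^ 2) fun l hl0 hl1 => ?_
  set τ := -(l * h) / (1 - l)
  have h1l : 0 < 1 - l := sub_pos.mpr hl1
  have hmix : (fun ω => W ω + (l • X) ω) =
      fun ω => (1 - l) * (W ω + τ * G ω) + l * (W ω + X ω + h * G ω) := by
    funext ω
    simp only [Pi.smul_apply, smul_eq_mul, τ]
    field_simp
    ring
  have hlX : l • X ∈ A := by simpa using hAconv hX hA0 hl0.le h1l.le (by ring)
  have hconc : (1 - l) * u (fun ω => W ω + τ * G ω) + l * u (fun ω => W ω + X ω + h * G ω) ≤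
      u (fun ω => W ω + (l • X) ω) := by
    rw [hmix]
    exact mul_add_mul_le_worstCaseExpectation hD
      (fun Q hQ => (hW Q hQ).add ((hG Q hQ).const_mul τ))
      (fun Q hQ => ((hW Q hQ).add (hAint Q hQ X hX)).add ((hG Q hQ).const_mul h)) h1l.le hl0.le
  have hloss := mul_le_mul_of_nonneg_left (hK τ) h1l.le
  have hτ : (1 - l) * (K * τ ^ 2) = l * (K * h ^ 2 * l / (1 - l)) := by
    simp only [τ]
    field_simp
  have hopt := hWopt _ hlX
  have hgain : l * (u (fun ω => W ω + X ω + h * G ω) - u W) ≤ l * (K * h ^ 2 * l / (1 - l)) := by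
    linarith
  exact le_of_mul_le_mul_left hgain hl0

end WorstCaseExpectation

theorem sqrt_le_sqrt_add_div {a y : ℝ} (ha : 0 < a) (hy : 0 ≤ y) :
    √y ≤ √a + (y - a) / (2 * √a) := by
  have hsa : 0 < √a := Real.sqrt_pos.mpr ha
  have h : √a + (y - a) / (2 * √a) - √y = (√a - √y) ^ 2 / (2 * √a) := by
    field_simp
    rw [sub_sq, Real.sq_sqrt ha.le, Real.sq_sqrt hy]
    ring
  rw [← sub_nonneg, h]
  positivity

theorem hasDerivAt_add_mul_sub_mul_sqrt (m μ γ a b d : ℝ) (ha : 0 < a) :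
    HasDerivAt (fun t => m + t * μ - γ * √(a + 2 * t * b + t ^ 2 * d))
      (μ - γ * b / √a) 0 := by
  have hq : HasDerivAt (fun t : ℝ => a + 2 * t * b + t ^ 2 * d) (2 * b) 0 := by
    refine ((((hasDerivAt_id (0 : ℝ)).const_mul 2).mul_const b).const_add a |>.add
      ((hasDerivAt_pow 2 (0 : ℝ)).mul_const d)).congr_deriv ?_
    simp
  have hsqrt := (Real.hasDerivAt_sqrt (by simpa using ha.ne')).comp 0 hq
  refine ((((hasDerivAt_id (0 : ℝ)).mul_const μ).const_add m).sub
    (hsqrt.const_mul γ)).congr_deriv ?_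
  rw [show a + 2 * 0 * b + 0 ^ 2 * d = a by ring]
  field_simp

theorem add_mul_sub_mul_sqrt_loss_le {m γ a b d t : ℝ} (hγ : 0 ≤ γ) (ha : 0 < a)
    (hq : 0 ≤ a + 2 * t * b + t ^ 2 * d) :
    (m - γ * √a) - (m + t * (γ * b / √a) - γ * √(a + 2 * t * b + t ^ 2 * d)) ≤
      γ * d / (2 * √a) * t ^ 2 := by
  have hsa : 0 < √a := Real.sqrt_pos.mpr ha
  have h := mul_le_mul_of_nonneg_left (sqrt_le_sqrt_add_div ha hq) hγ
  have e : γ * (√a + (a + 2 * t * b + t ^ 2 * d - a) / (2 * √a)) =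
      γ * √a + t * (γ * b / √a) + γ * d / (2 * √a) * t ^ 2 := by
    field_simp
    ring
  linarith

theorem stmt15_general {Ω : Type*} [MeasurableSpace Ω]
    (P : Measure Ω)
    (D : Set (Measure Ω))
    (hDprob : ∀ Q ∈ D, IsProbabilityMeasure Q)
    (hDcomp : ∀ Y : Ω → ℝ, (∀ Q ∈ D, Integrable Y Q) →
      ∃ Q ∈ D, ∀ Q' ∈ D, ∫ ω, Y ω ∂Q ≤ ∫ ω, Y ω ∂Q')
    (A : Set (Ω → ℝ)) (hA0 : (0 : Ω → ℝ) ∈ A) (hAconv : Convex ℝ A)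
    (hAint : ∀ Q ∈ D, ∀ X ∈ A, Integrable X Q)
    (W F : Ω → ℝ)
    (hW : ∀ Q ∈ D, Integrable W Q) (hF : ∀ Q ∈ D, Integrable F Q)
    (u : (Ω → ℝ) → ℝ)
    (hu : ∀ Y, u Y = sInf {r | ∃ Q ∈ D, r = ∫ ω, Y ω ∂Q})
    (γ : ℝ) (hγ : 0 < γ)
    (hGaussVal : ∀ (Y : Ω → ℝ) (m σ : ℝ), 0 ≤ σ →
      P.map Y = gaussianReal m (Real.toNNReal (σ ^ 2)) → u Y = m - γ * σ)
    (μW μF vW vF c : ℝ) (hvW : 0 < vW)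
    (hpsd : ∀ α β : ℝ, 0 ≤ α ^ 2 * vW + 2 * α * β * c + β ^ 2 * vF)
    (hjointGauss : ∀ α β : ℝ,
      P.map (fun ω => α * W ω + β * F ω) =
        gaussianReal (α * μW + β * μF)
          (Real.toNNReal (α ^ 2 * vW + 2 * α * β * c + β ^ 2 * vF)))
    (hWopt : ∀ X ∈ A, u (fun ω => W ω + X ω) ≤ u W) :
    {x : ℝ | IsGreatest
        {r | ∃ X ∈ A, ∃ h : ℝ, r = u (fun ω => W ω + X ω + h * (F ω - x))}
        (u W)} =
      {μF - γ * c / Real.sqrt vW} := by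
  obtain rfl : u = worstCaseExpectation D := funext hu
  have hval : ∀ t x : ℝ, worstCaseExpectation D (fun ω => W ω + t * (F ω - x)) =
      μW + t * (μF - x) - γ * √(vW + 2 * t * c + t ^ 2 * vF) := fun t x => by
    have hline := hGaussVal _ _ _ (Real.sqrt_nonneg _)
      (by rw [Real.sq_sqrt (hpsd 1 t)]; exact hjointGauss 1 t)
    simp only [one_pow, one_mul, mul_one] at hline
    have hshift : (fun ω => W ω + t * (F ω - x)) = fun ω => (W ω + t * F ω) + -(t * x) := by
      funext ω; ring
    rw [hshift, worstCaseExpectation_add_const (Y := fun ω => W ω + t * F ω) hDcomp hDprob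
      (fun Q hQ => (hW Q hQ).add ((hF Q hQ).const_mul t)), hline]
    ring
  have hW0 : worstCaseExpectation D W = μW - γ * √vW := by simpa using hval 0 0
  ext x
  refine ⟨fun hx => ?_, ?_⟩
  · have hmax : IsLocalMax (fun t => μW + t * (μF - x) - γ * √(vW + 2 * t * c + t ^ 2 * vF)) 0 :=
      Eventually.of_forall fun t => by
        simpa [hval, hW0] using hx.2 ⟨0, hA0, t, rfl⟩
    have hcrit := hmax.hasDerivAt_eq_zero (hasDerivAt_add_mul_sub_mul_sqrt _ _ γ _ c vF hvW)
    rw [mem_singleton_iff]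
    linarith
  · rintro rfl
    refine ⟨⟨0, hA0, 0, by simp⟩, ?_⟩
    rintro _ ⟨X, hX, h, rfl⟩
    have hG : ∀ Q ∈ D, Integrable (fun ω => F ω - (μF - γ * c / √vW)) Q := fun Q hQ =>
      have := hDprob Q hQ
      (hF Q hQ).sub (integrable_const _)
    refine worstCaseExpectation_le_of_quadratic_loss hDcomp hA0 hAconv hAint hW hG hWopt
      (K := γ * vF / (2 * √vW)) (fun τ => ?_) hX h
    rw [hval, hW0, sub_sub_cancel]
    exact add_mul_sub_mul_sqrt_loss_le hγ.le hvW (by simpa using hpsd 1 τ)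

/-- Gaussian single-agent NBC pricing: if `(W,F)` is jointly Gaussian, `u` is a
law-invariant coherent utility with `u(N(m,σ²)) = m − γσ`, and `W` is optimal,
then the single-agent NBC price set of `F` is `{E F − γ·cov(F,W)/√(var W)}`. -/
theorem stmt15 {Ω : Type*} [MeasurableSpace Ω]
    (P : Measure Ω) [IsProbabilityMeasure P]
    (D : Set (Measure Ω)) (hDne : D.Nonempty)
    (hDprob : ∀ Q ∈ D, IsProbabilityMeasure Q)
    (hDac : ∀ Q ∈ D, Q ≪ P)
    (hDconv : ∀ Q₁ ∈ D, ∀ Q₂ ∈ D, ∀ t : ℝ, 0 ≤ t → t ≤ 1 →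
      (ENNReal.ofReal t • Q₁ + ENNReal.ofReal (1 - t) • Q₂ : Measure Ω) ∈ D)
    (hDcomp : ∀ Y : Ω → ℝ, (∀ Q ∈ D, Integrable Y Q) →
      ∃ Q ∈ D, ∀ Q' ∈ D, ∫ ω, Y ω ∂Q ≤ ∫ ω, Y ω ∂Q')
    (A : Set (Ω → ℝ)) (hA0 : (0 : Ω → ℝ) ∈ A) (hAconv : Convex ℝ A)
    (hAint : ∀ Q ∈ D, ∀ X ∈ A, Integrable X Q)
    (W F : Ω → ℝ) (hWmeas : Measurable W) (hFmeas : Measurable F)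
    (hW : ∀ Q ∈ D, Integrable W Q) (hF : ∀ Q ∈ D, Integrable F Q)
    (u : (Ω → ℝ) → ℝ)
    (hu : ∀ Y, u Y = sInf {r | ∃ Q ∈ D, r = ∫ ω, Y ω ∂Q})
    (γ : ℝ) (hγ : 0 < γ)
    (hGaussVal : ∀ (Y : Ω → ℝ) (m σ : ℝ), 0 ≤ σ →
      P.map Y = gaussianReal m (Real.toNNReal (σ ^ 2)) → u Y = m - γ * σ)
    (μW μF vW vF c : ℝ) (hvW : 0 < vW)
    (hpsd : ∀ α β : ℝ, 0 ≤ α ^ 2 * vW + 2 * α * β * c + β ^ 2 * vF)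
    (hjointGauss : ∀ α β : ℝ,
      P.map (fun ω => α * W ω + β * F ω) =
        gaussianReal (α * μW + β * μF)
          (Real.toNNReal (α ^ 2 * vW + 2 * α * β * c + β ^ 2 * vF)))
    (hWopt : ∀ X ∈ A, u (fun ω => W ω + X ω) ≤ u W) :
    {x : ℝ | IsGreatest
        {r | ∃ X ∈ A, ∃ h : ℝ, r = u (fun ω => W ω + X ω + h * (F ω - x))}
        (u W)} =
      {μF - γ * c / Real.sqrt vW} :=
  stmt15_general P D hDprob hDcomp A hA0 hAconv hAint W F hW hF u hu γ hγ hGaussVal μW μF vW vF c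
    hvW hpsd hjointGauss hWopt
end
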